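/- arXiv:1811.06116 — 6 statements merged into one kernel-verified Lean document; each statement's English description precedes it below -/
import Mathlib

section
/- Assume L is nonresonant in the mixed space X_{M1,T} with Green's function G_{M1}[T], and L̃ is nonresonant in the Neumann space X_{N,2T} with Green's function G_N[2T]. Then G_{M1}[T](t,s) = G_N[2T](t,s) − G_N[2T](2T − t, s) for all (t,s) ∈ I × I. -/
open MeasureTheory Set

/-- `u` belongs to the space `W^{m,1}([0,T])`: it is of class `C^{m-1}` on `[0,T]` and
its `(m-1)`-st derivative is absolutely continuous, expressed via the fundamental
theorem of calculus with an integrable `m`-th derivative. -/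
def MemW (m : ℕ) (T : ℝ) (u : ℝ → ℝ) : Prop :=
  (∀ k < m, ContinuousOn (iteratedDeriv k u) (Icc 0 T)) ∧
  IntervalIntegrable (iteratedDeriv m u) volume 0 T ∧
  ∀ t ∈ Icc 0 T,
    iteratedDeriv (m - 1) u t
      = iteratedDeriv (m - 1) u 0 + ∫ s in (0:ℝ)..t, iteratedDeriv m u s

/-- The `2n`-th order linear differential operator
`L u = u^{(2n)} + a_{2n-1} u^{(2n-1)} + ⋯ + a_1 u' + a_0 u`. -/
noncomputable def Lop (n : ℕ) (a : ℕ → ℝ → ℝ) (u : ℝ → ℝ) (t : ℝ) : ℝ :=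
  iteratedDeriv (2 * n) u t + ∑ k ∈ Finset.range (2 * n), a k t * iteratedDeriv k u t

/-- Neumann space on `[0,T]`. -/
def XN (n : ℕ) (T : ℝ) : Set (ℝ → ℝ) :=
  {u | MemW (2 * n) T u ∧ ∀ k < n,
    iteratedDeriv (2 * k + 1) u 0 = 0 ∧ iteratedDeriv (2 * k + 1) u T = 0}

/-- Dirichlet space on `[0,T]`. -/
def XD (n : ℕ) (T : ℝ) : Set (ℝ → ℝ) :=
  {u | MemW (2 * n) T u ∧ ∀ k < n,
    iteratedDeriv (2 * k) u 0 = 0 ∧ iteratedDeriv (2 * k) u T = 0}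

/-- Mixed space 1 on `[0,T]`. -/
def XM1 (n : ℕ) (T : ℝ) : Set (ℝ → ℝ) :=
  {u | MemW (2 * n) T u ∧ ∀ k < n,
    iteratedDeriv (2 * k + 1) u 0 = 0 ∧ iteratedDeriv (2 * k) u T = 0}

/-- Mixed space 2 on `[0,T]`. -/
def XM2 (n : ℕ) (T : ℝ) : Set (ℝ → ℝ) :=
  {u | MemW (2 * n) T u ∧ ∀ k < n,
    iteratedDeriv (2 * k) u 0 = 0 ∧ iteratedDeriv (2 * k + 1) u T = 0}

/-- Periodic space on `[0,T]`. -/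
def XP (n : ℕ) (T : ℝ) : Set (ℝ → ℝ) :=
  {u | MemW (2 * n) T u ∧ ∀ k < 2 * n, iteratedDeriv k u 0 = iteratedDeriv k u T}

/-- Antiperiodic space on `[0,T]`. -/
def XA (n : ℕ) (T : ℝ) : Set (ℝ → ℝ) :=
  {u | MemW (2 * n) T u ∧ ∀ k < 2 * n, iteratedDeriv k u 0 = -iteratedDeriv k u T}

/-- The operator `Lop n a` is nonresonant in `X`: the only solution in `X` of the
homogeneous equation (a.e. on `[0,T]`) is the trivial one. -/
def Nonresonant (n : ℕ) (a : ℕ → ℝ → ℝ) (T : ℝ) (X : Set (ℝ → ℝ)) : Prop :=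
  ∀ u ∈ X, (∀ᵐ t ∂volume, t ∈ Icc 0 T → Lop n a u t = 0) →
    ∀ t ∈ Icc 0 T, u t = 0

/-- `G` is the Green's function of `(Lop n a, X)` on `[0,T]`: it is continuous on the
square and, for every `σ ∈ L¹(0,T)`, `t ↦ ∫₀ᵀ G t s σ s ds` is the unique solution in
`X` of `L u = σ` a.e. on `[0,T]`. -/
def IsGreen (n : ℕ) (a : ℕ → ℝ → ℝ) (T : ℝ) (X : Set (ℝ → ℝ)) (G : ℝ → ℝ → ℝ) : Prop :=
  ContinuousOn (fun p : ℝ × ℝ => G p.1 p.2) (Icc 0 T ×ˢ Icc 0 T) ∧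
  ∀ σ : ℝ → ℝ, IntervalIntegrable σ volume 0 T →
    ((fun t => ∫ s in (0:ℝ)..T, G t s * σ s) ∈ X ∧
     (∀ᵐ t ∂volume, t ∈ Icc 0 T →
        Lop n a (fun t' => ∫ s in (0:ℝ)..T, G t' s * σ s) t = σ t) ∧
     ∀ v ∈ X, (∀ᵐ t ∂volume, t ∈ Icc 0 T → Lop n a v t = σ t) →
       ∀ t ∈ Icc 0 T, v t = ∫ s in (0:ℝ)..T, G t s * σ s)

/-- Coefficients of the extended operator `L̃` on `[0,2T]`: the even-order coefficients
are extended evenly about `t = T`, the odd-order ones oddly. -/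
noncomputable def tildeCoef (T : ℝ) (a : ℕ → ℝ → ℝ) : ℕ → ℝ → ℝ :=
  fun k t => if t ≤ T then a k t else (-1 : ℝ) ^ k * a k (2 * T - t)

/-- Coefficients of the reflected operator `Ľ`:
`Ľ u = u^{(2n)} + Σ (-1)^k a_k(T - t) u^{(k)}`. -/
noncomputable def checkCoef (T : ℝ) (a : ℕ → ℝ → ℝ) : ℕ → ℝ → ℝ :=
  fun k t => (-1 : ℝ) ^ k * a k (T - t)

/-- `u` is an eigenfunction of `Lop n a` in `X` associated to the eigenvalue `lam`:
`u ∈ X`, `u` is not identically zero on `[0,T]`, and `L u + lam u = 0` a.e. on `[0,T]`. -/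
def IsEigenfun (n : ℕ) (a : ℕ → ℝ → ℝ) (T : ℝ) (X : Set (ℝ → ℝ)) (lam : ℝ)
    (u : ℝ → ℝ) : Prop :=
  u ∈ X ∧ (∃ t ∈ Icc 0 T, u t ≠ 0) ∧
  ∀ᵐ t ∂volume, t ∈ Icc 0 T → Lop n a u t + lam * u t = 0

/-- The set of eigenvalues (the spectrum) of `Lop n a` in `X`. -/
def SpecSet (n : ℕ) (a : ℕ → ℝ → ℝ) (T : ℝ) (X : Set (ℝ → ℝ)) : Set ℝ :=
  {lam | ∃ u, IsEigenfun n a T X lam u}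

/-- `lam0` is the smallest eigenvalue of `Lop n a` in `X`, it is simple (its
eigenfunctions form a one-dimensional space), and it admits an eigenfunction which is
strictly positive on the interior of the interval. -/
def IsPrincipal (n : ℕ) (a : ℕ → ℝ → ℝ) (T : ℝ) (X : Set (ℝ → ℝ)) (lam0 : ℝ) : Prop :=
  lam0 ∈ SpecSet n a T X ∧
  (∀ mu ∈ SpecSet n a T X, lam0 ≤ mu) ∧
  (∀ u v, IsEigenfun n a T X lam0 u → IsEigenfun n a T X lam0 v →
      ∃ c : ℝ, ∀ t ∈ Icc 0 T, v t = c * u t) ∧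
  ∃ u, IsEigenfun n a T X lam0 u ∧ ∀ t ∈ Ioo 0 T, 0 < u t



private lemma iteratedDeriv_comp_const_sub' (f : ℝ → ℝ) (c : ℝ) (k : ℕ) (t : ℝ) :
    iteratedDeriv k (fun x => f (c - x)) t = (-1 : ℝ)^k * iteratedDeriv k f (c - t) := by
  induction k generalizing t with
  | zero => simp
  | succ k ih =>
    rw [iteratedDeriv_succ, iteratedDeriv_succ]
    have h : iteratedDeriv k (fun x => f (c - x))
        = fun t => (-1:ℝ)^k * iteratedDeriv k f (c - t) := funext fun t => ih t
    rw [h, deriv_const_mul_field, deriv_comp_const_sub]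
    ring

private lemma eventuallyEq_iteratedDeriv' {f g : ℝ → ℝ} {x : ℝ} (h : f =ᶠ[nhds x] g) (k : ℕ) :
    iteratedDeriv k f =ᶠ[nhds x] iteratedDeriv k g := by
  induction k with
  | zero => simpa using h
  | succ k ih => simpa [iteratedDeriv_succ] using ih.deriv

private lemma extraction' {T : ℝ} (hT : 0 < T) {f : ℝ → ℝ} (hf : ContinuousOn f (Icc 0 T))
    (h : ∀ σ : ℝ → ℝ, IntervalIntegrable σ volume 0 T → ∫ s in (0:ℝ)..T, f s * σ s = 0) :
    ∀ s ∈ Icc (0:ℝ) T, f s = 0 := by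
  set F : ℝ → ℝ := fun s => if s ∈ Icc (0:ℝ) T then f s else 0 with hF
  have hFeq : EqOn F f (Icc 0 T) := fun s hs => if_pos hs
  have hFc : ContinuousOn F (Icc 0 T) := hf.congr hFeq
  have hFi : IntervalIntegrable F volume 0 T := by
    apply ContinuousOn.intervalIntegrable
    rwa [uIcc_of_le hT.le]
  have h1 : ∫ s in (0:ℝ)..T, F s * F s = 0 := by
    refine Eq.trans ?_ (h F hFi)
    apply intervalIntegral.integral_congr
    intro s hs
    rw [uIcc_of_le hT.le] at hs
    simp only []
    rw [hFeq hs]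
  intro s hs
  by_contra hne
  have h2 : 0 < ∫ s in (0:ℝ)..T, F s * F s := by
    apply intervalIntegral.integral_pos hT (hFc.mul hFc)
    · intro x _; exact mul_self_nonneg _
    · exact ⟨s, hs, by rw [Pi.mul_apply, hFeq hs]; exact mul_self_pos.2 hne⟩
  linarith

private lemma ae_reflect' {c : ℝ} {P : ℝ → Prop} (h : ∀ᵐ t : ℝ, P t) :
    ∀ᵐ t : ℝ, P (c - t) := by
  have hmp : MeasurePreserving (fun x : ℝ => c - x) volume volume := by
    have h1 := Measure.measurePreserving_neg (volume : Measure ℝ)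
    have h2 := measurePreserving_add_left (volume : Measure ℝ) c
    have h3 := h2.comp h1
    simpa [Function.comp_def, sub_eq_add_neg] using h3
  exact hmp.quasiMeasurePreserving.ae h

private lemma ae_ne' (c : ℝ) : ∀ᵐ t : ℝ, t ≠ c := by
  have : (volume : Measure ℝ) {c} = 0 := Real.volume_singleton
  simpa [ae_iff] using this

private lemma tildeCoef_reflect {T : ℝ} (a : ℕ → ℝ → ℝ) (k : ℕ) {t : ℝ} (ht : t ≠ T) :
    tildeCoef T a k (2*T - t) = (-1:ℝ)^k * tildeCoef T a k t := by
  unfold tildeCoef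
  by_cases h : t ≤ T
  · have h' : ¬(2*T - t ≤ T) := by
      intro hc
      exact ht (le_antisymm h (by linarith))
    rw [if_neg h', if_pos h]
    have he : 2*T - (2*T - t) = t := by ring
    rw [he]
  · have h' : 2*T - t ≤ T := by push_neg at h; linarith
    rw [if_pos h', if_neg h]
    rw [← mul_assoc, ← pow_add]
    have hev : Even (k + k) := ⟨k, rfl⟩
    rw [hev.neg_one_pow, one_mul]

private lemma piecewise_integrable {T : ℝ} (hT : 0 < T) {σ₀ g : ℝ → ℝ}
    (h0 : IntervalIntegrable σ₀ volume 0 T)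
    (hg : IntervalIntegrable g volume T (2*T)) :
    IntervalIntegrable (fun s => if s ≤ T then σ₀ s else g s) volume 0 (2*T) := by
  have h1 : IntervalIntegrable (fun s => if s ≤ T then σ₀ s else g s) volume 0 T := by
    apply h0.congr_ae
    rw [Filter.EventuallyEq, ae_restrict_iff' measurableSet_uIoc]
    apply Filter.Eventually.of_forall
    intro x hx
    rw [uIoc_of_le hT.le] at hx
    simp only [if_pos hx.2]
  have h2 : IntervalIntegrable (fun s => if s ≤ T then σ₀ s else g s) volume T (2*T) := by
    apply hg.congr_ae
    rw [Filter.EventuallyEq, ae_restrict_iff' measurableSet_uIoc]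
    apply Filter.Eventually.of_forall
    intro x hx
    rw [uIoc_of_le (by linarith : T ≤ 2*T)] at hx
    simp only [if_neg (not_le.mpr hx.1)]
  exact h1.trans h2

private lemma integral_split {T : ℝ} (hT : 0 < T) (g σ : ℝ → ℝ)
    (hg : ContinuousOn g (Icc 0 (2*T))) (hσ : IntervalIntegrable σ volume 0 (2*T)) :
    ∫ s in (0:ℝ)..(2*T), g s * σ s
      = (∫ s in (0:ℝ)..T, g s * σ s) + ∫ s in T..(2*T), g s * σ s := by
  refine (intervalIntegral.integral_add_adjacent_intervals ?_ ?_).symm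
  · refine IntervalIntegrable.continuousOn_mul ?_ ?_
    · apply hσ.mono_set
      rw [uIcc_of_le hT.le, uIcc_of_le (by linarith : (0:ℝ) ≤ 2*T)]
      exact Icc_subset_Icc le_rfl (by linarith)
    · rw [uIcc_of_le hT.le]
      exact hg.mono (Icc_subset_Icc le_rfl (by linarith))
  · refine IntervalIntegrable.continuousOn_mul ?_ ?_
    · apply hσ.mono_set
      rw [uIcc_of_le (by linarith : T ≤ 2*T), uIcc_of_le (by linarith : (0:ℝ) ≤ 2*T)]
      exact Icc_subset_Icc hT.le le_rfl
    · rw [uIcc_of_le (by linarith : T ≤ 2*T)]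
      exact hg.mono (Icc_subset_Icc hT.le le_rfl)

private lemma reflect_identity (n : ℕ) (hn : 1 ≤ n) {T : ℝ} (hT : 0 < T)
    (a : ℕ → ℝ → ℝ) (GN2 : ℝ → ℝ → ℝ)
    (hGN2 : IsGreen n (tildeCoef T a) (2 * T) (XN n (2 * T)) GN2)
    (σ : ℝ → ℝ) (hσ : IntervalIntegrable σ volume 0 (2*T)) :
    ∀ t ∈ Icc (0:ℝ) (2*T),
      (∫ s in (0:ℝ)..(2*T), GN2 (2*T - t) s * σ s)
        = ∫ s in (0:ℝ)..(2*T), GN2 t s * σ (2*T - s) := by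
  obtain ⟨hcont, hgreen⟩ := hGN2
  obtain ⟨hw_mem, hw_sol, -⟩ := hgreen σ hσ
  have hσ' : IntervalIntegrable (fun s => σ (2*T - s)) volume 0 (2*T) := by
    have h2 := (hσ.comp_sub_left (2*T)).symm
    simpa using h2
  obtain ⟨-, -, huniq⟩ := hgreen _ hσ'
  obtain ⟨⟨hwc, hwi, hwftc⟩, hwbc⟩ := hw_mem
  set w : ℝ → ℝ := fun t => ∫ s in (0:ℝ)..(2*T), GN2 t s * σ s with hw
  set v : ℝ → ℝ := fun t => w (2*T - t) with hv
  have hvd : ∀ k t, iteratedDeriv k v t = (-1:ℝ)^k * iteratedDeriv k w (2*T - t) :=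
    fun k t => iteratedDeriv_comp_const_sub' w (2*T) k t
  have hmaps : MapsTo (fun t => 2*T - t) (Icc (0:ℝ) (2*T)) (Icc (0:ℝ) (2*T)) := by
    intro t ht
    simp only [mem_Icc] at ht ⊢
    constructor <;> linarith
  have hevp : (-1:ℝ)^(2*n) = 1 := Even.neg_one_pow ⟨n, by ring⟩
  have hoddp : (-1:ℝ)^(2*n-1) = -1 := Odd.neg_one_pow ⟨n-1, by omega⟩
  have hvXN : v ∈ XN n (2*T) := by
    refine ⟨⟨?_, ?_, ?_⟩, ?_⟩
    · intro k hk
      have h : iteratedDeriv k v = fun t => (-1:ℝ)^k * iteratedDeriv k w (2*T - t) :=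
        funext (hvd k)
      rw [h]
      apply ContinuousOn.mul continuousOn_const
      exact (hwc k hk).comp ((continuous_const.sub continuous_id).continuousOn) hmaps
    · have h : iteratedDeriv (2*n) v
          = fun t => (-1:ℝ)^(2*n) * iteratedDeriv (2*n) w (2*T - t) := funext (hvd _)
      rw [h]
      have h3 : IntervalIntegrable (fun x => iteratedDeriv (2*n) w (2*T - x))
          volume 0 (2*T) := by
        have h4 := (hwi.comp_sub_left (2*T)).symm
        simpa using h4
      exact h3.const_mul _
    · intro t ht
      have hint : iteratedDeriv (2*n) v = fun s => iteratedDeriv (2*n) w (2*T - s) := by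
        funext s; rw [hvd, hevp, one_mul]
      rw [hvd (2*n-1) t, hvd (2*n-1) 0, hoddp, hint, sub_zero]
      rw [intervalIntegral.integral_comp_sub_left (iteratedDeriv (2*n) w) (2*T)]
      rw [sub_zero]
      have h0c : (0:ℝ) ≤ 2*T - t := by linarith [ht.2]
      have hsub : IntervalIntegrable (iteratedDeriv (2*n) w) volume 0 (2*T - t) := by
        apply hwi.mono_set
        rw [uIcc_of_le h0c, uIcc_of_le (by linarith : (0:ℝ) ≤ 2*T)]
        exact Icc_subset_Icc le_rfl (by linarith [ht.1])
      have hsplit := intervalIntegral.integral_interval_sub_left hwi hsub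
      have h0 := hwftc (2*T - t) (hmaps ht)
      have h1 := hwftc (2*T) ⟨by linarith, le_rfl⟩
      linarith [hsplit, h0, h1]
    · intro k hk
      have hop : (-1:ℝ)^(2*k+1) = -1 := Odd.neg_one_pow ⟨k, by ring⟩
      constructor
      · rw [hvd, hop, sub_zero, (hwbc k hk).2]; ring
      · rw [hvd, hop, sub_self, (hwbc k hk).1]; ring
  have hws' := ae_reflect' (c := 2*T) hw_sol
  have hne := ae_ne' T
  have hv_sol : ∀ᵐ t : ℝ, t ∈ Icc (0:ℝ) (2*T) →
      Lop n (tildeCoef T a) v t = σ (2*T - t) := by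
    filter_upwards [hws', hne] with t h1 h2 ht
    have h3 := h1 (hmaps ht)
    unfold Lop at h3 ⊢
    rw [← h3]
    rw [hvd (2*n) t, hevp, one_mul]
    congr 1
    apply Finset.sum_congr rfl
    intro k hk
    rw [hvd k t, tildeCoef_reflect a k h2]
    ring
  intro t ht
  have hvt := huniq v hvXN hv_sol t ht
  simp only [hv, hw] at hvt
  simpa using hvt


private lemma GN2_symm (n : ℕ) (hn : 1 ≤ n) {T : ℝ} (hT : 0 < T)
    (a : ℕ → ℝ → ℝ) (GN2 : ℝ → ℝ → ℝ)
    (hGN2 : IsGreen n (tildeCoef T a) (2 * T) (XN n (2 * T)) GN2) :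
    ∀ t ∈ Icc (0:ℝ) (2*T), ∀ s ∈ Icc (0:ℝ) T, GN2 (2*T - t) s = GN2 t (2*T - s) := by
  intro t ht
  have hrow : ∀ t' ∈ Icc (0:ℝ) (2*T), ContinuousOn (fun s => GN2 t' s) (Icc 0 (2*T)) := by
    intro t' ht'
    exact hGN2.1.comp (Continuous.continuousOn (by fun_prop))
      (fun s hs => mk_mem_prod ht' hs)
  have h2t : 2*T - t ∈ Icc (0:ℝ) (2*T) := ⟨by linarith [ht.2], by linarith [ht.1]⟩
  have hsub01 : Icc (0:ℝ) T ⊆ Icc (0:ℝ) (2*T) := Icc_subset_Icc le_rfl (by linarith)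
  have hmaps2 : MapsTo (fun s : ℝ => (t, 2*T - s)) (Icc (0:ℝ) T)
      (Icc (0:ℝ) (2*T) ×ˢ Icc (0:ℝ) (2*T)) := by
    intro s hs
    simp only [mem_Icc] at hs
    exact mk_mem_prod ht ⟨by linarith, by linarith⟩
  have hrow2 : ContinuousOn (fun s => GN2 t (2*T - s)) (Icc 0 T) :=
    hGN2.1.comp (Continuous.continuousOn (by fun_prop)) hmaps2
  have hfc : ContinuousOn (fun s => GN2 (2*T - t) s - GN2 t (2*T - s)) (Icc 0 T) :=
    (((hrow _ h2t).mono hsub01).sub hrow2)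
  have hext : ∀ s ∈ Icc (0:ℝ) T, GN2 (2*T - t) s - GN2 t (2*T - s) = 0 := by
    refine extraction' hT hfc ?_
    intro σ₀ hσ₀
    set σ : ℝ → ℝ := fun s => if s ≤ T then σ₀ s else 0 with hσdef
    have hσi : IntervalIntegrable σ volume 0 (2*T) :=
      piecewise_integrable hT hσ₀ (intervalIntegrable_const (c := (0:ℝ)))
    have hσci : IntervalIntegrable (fun s => σ (2*T - s)) volume 0 (2*T) := by
      have h2 := (hσi.comp_sub_left (2*T)).symm
      simpa using h2
    have hRt := reflect_identity n hn hT a GN2 hGN2 σ hσi t ht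
    -- left side
    have hL : (∫ s in (0:ℝ)..(2*T), GN2 (2*T - t) s * σ s)
        = ∫ s in (0:ℝ)..T, GN2 (2*T - t) s * σ₀ s := by
      have hsp : (∫ s in (0:ℝ)..(2*T), GN2 (2*T - t) s * σ s)
          = (∫ s in (0:ℝ)..T, GN2 (2*T - t) s * σ s)
            + ∫ s in T..(2*T), GN2 (2*T - t) s * σ s :=
        integral_split hT (fun s => GN2 (2*T - t) s) σ (hrow _ h2t) hσi
      have e1 : (∫ s in (0:ℝ)..T, GN2 (2*T - t) s * σ s)
          = ∫ s in (0:ℝ)..T, GN2 (2*T - t) s * σ₀ s := by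
        apply intervalIntegral.integral_congr
        intro s hs
        rw [uIcc_of_le hT.le] at hs
        simp only [hσdef]
        rw [if_pos hs.2]
      have e2 : (∫ s in T..(2*T), GN2 (2*T - t) s * σ s) = 0 := by
        have hz : ∀ᵐ x : ℝ, x ∈ Set.uIoc T (2*T) → GN2 (2*T - t) x * σ x = (fun _ => (0:ℝ)) x := by
          apply Filter.Eventually.of_forall
          intro x hx
          rw [uIoc_of_le (by linarith : T ≤ 2*T)] at hx
          simp only [hσdef]
          rw [if_neg (not_le.mpr hx.1), mul_zero]
        rw [intervalIntegral.integral_congr_ae hz, intervalIntegral.integral_zero]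
      rw [hsp, e1, e2, add_zero]
    -- right side
    have hR : (∫ s in (0:ℝ)..(2*T), GN2 t s * σ (2*T - s))
        = ∫ s in (0:ℝ)..T, GN2 t (2*T - s) * σ₀ s := by
      have hsp : (∫ s in (0:ℝ)..(2*T), GN2 t s * σ (2*T - s))
          = (∫ s in (0:ℝ)..T, GN2 t s * σ (2*T - s))
            + ∫ s in T..(2*T), GN2 t s * σ (2*T - s) :=
        integral_split hT (fun s => GN2 t s) (fun s => σ (2*T - s)) (hrow t ht) hσci
      have e1 : (∫ s in (0:ℝ)..T, GN2 t s * σ (2*T - s)) = 0 := by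
        have hz : ∀ᵐ x : ℝ, x ∈ Set.uIoc 0 T → GN2 t x * σ (2*T - x) = (fun _ => (0:ℝ)) x := by
          filter_upwards [ae_ne' T] with x hxne hx
          rw [uIoc_of_le hT.le] at hx
          have hno : ¬(2*T - x ≤ T) := by
            intro hc
            exact hxne (le_antisymm hx.2 (by linarith))
          simp only [hσdef]
          rw [if_neg hno, mul_zero]
        rw [intervalIntegral.integral_congr_ae hz, intervalIntegral.integral_zero]
      have e2 : (∫ s in T..(2*T), GN2 t s * σ (2*T - s))
          = ∫ s in T..(2*T), GN2 t s * σ₀ (2*T - s) := by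
        apply intervalIntegral.integral_congr
        intro s hs
        rw [uIcc_of_le (by linarith : T ≤ 2*T)] at hs
        have hyes : 2*T - s ≤ T := by linarith [hs.1]
        simp only [hσdef]
        rw [if_pos hyes]
      have e3 : (∫ s in T..(2*T), GN2 t s * σ₀ (2*T - s))
          = ∫ x in (0:ℝ)..T, GN2 t (2*T - x) * σ₀ x := by
        have h5 := intervalIntegral.integral_comp_sub_left (a := T) (b := 2*T)
          (fun x => GN2 t (2*T - x) * σ₀ x) (2*T)
        have hid : ∀ x : ℝ, 2*T - (2*T - x) = x := fun x => by ring
        simp only [hid] at h5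
        have hend : 2*T - T = T := by ring
        rw [sub_self, hend] at h5
        exact h5
      rw [hsp, e1, e2, e3, zero_add]
    have hkey : (∫ s in (0:ℝ)..T, GN2 (2*T - t) s * σ₀ s)
        = ∫ s in (0:ℝ)..T, GN2 t (2*T - s) * σ₀ s := by
      rw [← hL, ← hR]
      exact hRt
    have hi1 : IntervalIntegrable (fun s => GN2 (2*T - t) s * σ₀ s) volume 0 T := by
      refine hσ₀.continuousOn_mul ?_
      rw [uIcc_of_le hT.le]
      exact (hrow _ h2t).mono hsub01
    have hi2 : IntervalIntegrable (fun s => GN2 t (2*T - s) * σ₀ s) volume 0 T := by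
      refine hσ₀.continuousOn_mul ?_
      rw [uIcc_of_le hT.le]
      exact hrow2
    have hexp : (fun s => (GN2 (2*T - t) s - GN2 t (2*T - s)) * σ₀ s)
        = fun s => GN2 (2*T - t) s * σ₀ s - GN2 t (2*T - s) * σ₀ s := by
      funext s; ring
    calc (∫ s in (0:ℝ)..T, (GN2 (2*T - t) s - GN2 t (2*T - s)) * σ₀ s)
        = (∫ s in (0:ℝ)..T, GN2 (2*T - t) s * σ₀ s)
          - ∫ s in (0:ℝ)..T, GN2 t (2*T - s) * σ₀ s := by
          rw [hexp]; exact intervalIntegral.integral_sub hi1 hi2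
      _ = 0 := by rw [hkey, sub_self]
  intro s hs
  have := hext s hs
  linarith


theorem green_mixed1_neumann (n : ℕ) (hn : 1 ≤ n) (T : ℝ) (hT : 0 < T)
    (a : ℕ → ℝ → ℝ) (ha : ∀ k < 2 * n, IntervalIntegrable (a k) volume 0 T)
    (GM1 GN2 : ℝ → ℝ → ℝ)
    (hM1res : Nonresonant n a T (XM1 n T))
    (hGM1 : IsGreen n a T (XM1 n T) GM1)
    (hN2res : Nonresonant n (tildeCoef T a) (2 * T) (XN n (2 * T)))
    (hGN2 : IsGreen n (tildeCoef T a) (2 * T) (XN n (2 * T)) GN2) :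
    ∀ t ∈ Icc 0 T, ∀ s ∈ Icc 0 T,
      GM1 t s = GN2 t s - GN2 (2 * T - t) s := by
  intro t ht
  have hrow : ∀ t' ∈ Icc (0:ℝ) (2*T), ContinuousOn (fun s => GN2 t' s) (Icc 0 (2*T)) := by
    intro t' ht'
    exact hGN2.1.comp (Continuous.continuousOn (by fun_prop))
      (fun s hs => mk_mem_prod ht' hs)
  have hrowM : ContinuousOn (fun s => GM1 t s) (Icc 0 T) :=
    hGM1.1.comp (Continuous.continuousOn (by fun_prop)) (fun s hs => mk_mem_prod ht hs)
  have hsub01 : Icc (0:ℝ) T ⊆ Icc (0:ℝ) (2*T) := Icc_subset_Icc le_rfl (by linarith)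
  have htt : t ∈ Icc (0:ℝ) (2*T) := hsub01 ht
  have h2t : 2*T - t ∈ Icc (0:ℝ) (2*T) := ⟨by linarith [ht.2], by linarith [ht.1]⟩
  have hfc : ContinuousOn (fun s => GM1 t s - (GN2 t s - GN2 (2*T - t) s)) (Icc 0 T) :=
    hrowM.sub (((hrow t htt).mono hsub01).sub ((hrow _ h2t).mono hsub01))
  have hext : ∀ s ∈ Icc (0:ℝ) T, GM1 t s - (GN2 t s - GN2 (2*T - t) s) = 0 := by
    refine extraction' hT hfc ?_
    intro σ₀ hσ₀
    set σ : ℝ → ℝ := fun s => if s ≤ T then σ₀ s else -σ₀ (2*T - s) with hσdef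
    have hg2 : IntervalIntegrable (fun s => -σ₀ (2*T - s)) volume T (2*T) := by
      have h6 := ((hσ₀.comp_sub_left (2*T)).symm).neg
      have hE : 2*T - T = T := by ring
      rw [hE, sub_zero] at h6
      exact h6
    have hσi : IntervalIntegrable σ volume 0 (2*T) := piecewise_integrable hT hσ₀ hg2
    obtain ⟨hw_mem, hw_sol, -⟩ := hGN2.2 σ hσi
    obtain ⟨⟨hwc, hwi, hwftc⟩, hwbc⟩ := hw_mem
    set w : ℝ → ℝ := fun u => ∫ s in (0:ℝ)..(2*T), GN2 u s * σ s with hw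
    have hodd : ∀ u ∈ Icc (0:ℝ) (2*T), w (2*T - u) = - w u := by
      intro u hu
      have hid := reflect_identity n hn hT a GN2 hGN2 σ hσi u hu
      have hneg : (∫ s in (0:ℝ)..(2*T), GN2 u s * σ (2*T - s))
          = ∫ s in (0:ℝ)..(2*T), GN2 u s * (-σ s) := by
        apply intervalIntegral.integral_congr_ae
        filter_upwards [ae_ne' T] with x hxne hx
        rw [uIoc_of_le (by linarith : (0:ℝ) ≤ 2*T)] at hx
        by_cases hc : x ≤ T
        · have hlt : x < T := lt_of_le_of_ne hc hxne
          have h1 : ¬(2*T - x ≤ T) := by intro h; linarith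
          simp only [hσdef]
          rw [if_neg h1, if_pos hc]
          have h9 : 2*T - (2*T - x) = x := by ring
          rw [h9]
        · have h1 : 2*T - x ≤ T := by push_neg at hc; linarith
          simp only [hσdef]
          rw [if_pos h1, if_neg hc]
          ring
      have hneg2 : (∫ s in (0:ℝ)..(2*T), GN2 u s * (-σ s)) = - w u := by
        simp only [mul_neg]
        rw [intervalIntegral.integral_neg]
      calc w (2*T - u) = ∫ s in (0:ℝ)..(2*T), GN2 (2*T - u) s * σ s := rfl
        _ = ∫ s in (0:ℝ)..(2*T), GN2 u s * σ (2*T - s) := hid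
        _ = ∫ s in (0:ℝ)..(2*T), GN2 u s * (-σ s) := hneg
        _ = - w u := hneg2
    have hwM1 : w ∈ XM1 n T := by
      refine ⟨⟨?_, ?_, ?_⟩, ?_⟩
      · intro k hk; exact (hwc k hk).mono hsub01
      · apply hwi.mono_set
        rw [uIcc_of_le hT.le, uIcc_of_le (by linarith : (0:ℝ) ≤ 2*T)]
        exact hsub01
      · intro u hu; exact hwftc u (hsub01 hu)
      · intro k hk
        refine ⟨(hwbc k hk).1, ?_⟩
        have hnb : Icc (0:ℝ) (2*T) ∈ nhds T := Icc_mem_nhds (by linarith) (by linarith)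
        have hEq : (fun u => w (2*T - u)) =ᶠ[nhds T] (fun u => - w u) :=
          Filter.eventuallyEq_of_mem hnb (fun u hu => hodd u hu)
        have h1 := (eventuallyEq_iteratedDeriv' hEq (2*k)).self_of_nhds
        rw [iteratedDeriv_comp_const_sub' w (2*T) (2*k) T] at h1
        have hev : (-1:ℝ)^(2*k) = 1 := Even.neg_one_pow ⟨k, by ring⟩
        rw [hev, one_mul] at h1
        have h2 : iteratedDeriv (2*k) (fun u => -(w u)) T = -(iteratedDeriv (2*k) w T) :=
          iteratedDeriv_neg (2*k) w T
        have h3 : 2*T - T = T := by ring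
        rw [h3, h2] at h1
        linarith
    have hLw : ∀ᵐ u : ℝ, u ∈ Icc (0:ℝ) T → Lop n a w u = σ₀ u := by
      filter_upwards [hw_sol] with u h1 hu
      have h2 := h1 (hsub01 hu)
      have h4 : σ u = σ₀ u := by simp only [hσdef]; rw [if_pos hu.2]
      rw [← h4, ← h2]
      unfold Lop
      congr 1
      apply Finset.sum_congr rfl
      intro k hk
      have h5 : tildeCoef T a k u = a k u := if_pos hu.2
      rw [h5]
    have hval : w t = ∫ s in (0:ℝ)..T, GM1 t s * σ₀ s := (hGM1.2 σ₀ hσ₀).2.2 w hwM1 hLw t ht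
    have hsymm := GN2_symm n hn hT a GN2 hGN2
    have hsp : w t = (∫ s in (0:ℝ)..T, GN2 t s * σ s) + ∫ s in T..(2*T), GN2 t s * σ s :=
      integral_split hT (fun s => GN2 t s) σ (hrow t htt) hσi
    have e1 : (∫ s in (0:ℝ)..T, GN2 t s * σ s) = ∫ s in (0:ℝ)..T, GN2 t s * σ₀ s := by
      apply intervalIntegral.integral_congr
      intro x hx
      rw [uIcc_of_le hT.le] at hx
      simp only [hσdef]
      rw [if_pos hx.2]
    have e2 : (∫ s in T..(2*T), GN2 t s * σ s)
        = ∫ s in T..(2*T), GN2 t s * (-σ₀ (2*T - s)) := by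
      apply intervalIntegral.integral_congr_ae
      apply Filter.Eventually.of_forall
      intro x hx
      rw [uIoc_of_le (by linarith : T ≤ 2*T)] at hx
      simp only [hσdef]
      rw [if_neg (not_le.mpr hx.1)]
    have e3 : (∫ s in T..(2*T), GN2 t s * (-σ₀ (2*T - s)))
        = - ∫ s in T..(2*T), GN2 t s * σ₀ (2*T - s) := by
      simp only [mul_neg]
      rw [intervalIntegral.integral_neg]
    have e4 : (∫ s in T..(2*T), GN2 t s * σ₀ (2*T - s))
        = ∫ x in (0:ℝ)..T, GN2 t (2*T - x) * σ₀ x := by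
      have h5 := intervalIntegral.integral_comp_sub_left (a := T) (b := 2*T)
        (fun x => GN2 t (2*T - x) * σ₀ x) (2*T)
      have hid : ∀ x : ℝ, 2*T - (2*T - x) = x := fun x => by ring
      simp only [hid] at h5
      have hend : 2*T - T = T := by ring
      rw [sub_self, hend] at h5
      exact h5
    have e5 : (∫ x in (0:ℝ)..T, GN2 t (2*T - x) * σ₀ x)
        = ∫ x in (0:ℝ)..T, GN2 (2*T - t) x * σ₀ x := by
      apply intervalIntegral.integral_congr
      intro x hx
      rw [uIcc_of_le hT.le] at hx
      show GN2 t (2*T - x) * σ₀ x = GN2 (2*T - t) x * σ₀ x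
      rw [← hsymm t htt x hx]
    have hwt : w t = (∫ s in (0:ℝ)..T, GN2 t s * σ₀ s)
        - ∫ s in (0:ℝ)..T, GN2 (2*T - t) s * σ₀ s := by
      rw [hsp, e1, e2, e3, e4, e5]
      ring
    have hi1 : IntervalIntegrable (fun s => GM1 t s * σ₀ s) volume 0 T := by
      refine hσ₀.continuousOn_mul ?_
      rw [uIcc_of_le hT.le]
      exact hrowM
    have hi2 : IntervalIntegrable (fun s => GN2 t s * σ₀ s) volume 0 T := by
      refine hσ₀.continuousOn_mul ?_
      rw [uIcc_of_le hT.le]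
      exact (hrow t htt).mono hsub01
    have hi3 : IntervalIntegrable (fun s => GN2 (2*T - t) s * σ₀ s) volume 0 T := by
      refine hσ₀.continuousOn_mul ?_
      rw [uIcc_of_le hT.le]
      exact (hrow _ h2t).mono hsub01
    have hexp : (fun s => (GM1 t s - (GN2 t s - GN2 (2*T - t) s)) * σ₀ s)
        = fun s => GM1 t s * σ₀ s - (GN2 t s * σ₀ s - GN2 (2*T - t) s * σ₀ s) := by
      funext x; ring
    rw [hexp, intervalIntegral.integral_sub hi1 (hi2.sub hi3),
      intervalIntegral.integral_sub hi2 hi3]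
    linarith [hval, hwt]
  intro s hs
  have h9 := hext s hs
  linarith
end

section
/- Assume L is nonresonant in the mixed space X_{M2,T} with Green's function G_{M2}[T], and L̃ is nonresonant in the Dirichlet space X_{D,2T} with Green's function G_D[2T]. Then G_{M2}[T](t,s) = G_D[2T](t,s) + G_D[2T](2T − t, s) for all (t,s) ∈ I × I. -/
open MeasureTheory Set

/-! The reflection `u ↦ u (2T - ·)` preserves the Dirichlet conditions on `[0, 2T]` and commutes
with `L̃`, so by uniqueness it commutes with the Green operator of `(L̃, X_{D,2T})`. Given
`σ ∈ L¹(0,T)`, let `f` be its even extension to `[0, 2T]`, written as `g + g (2T - ·)` with `g` the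
extension by zero. The Dirichlet solution `u` of `L̃ u = f` is then symmetric about `T`, so its odd
derivatives vanish at `T` and `u|[0,T] ∈ X_{M2,T}` solves `L u = σ`; hence it is the mixed
solution. Splitting `f` computes `u(t) = ∫₀ᵀ (G_D(t,s) + G_D(2T-t,s)) σ(s) ds`, and since `σ`
is arbitrary, the kernels agree (du Bois-Reymond). -/

open Topology

section Reflection

variable {c : ℝ}

lemma IntervalIntegrable.comp_const_sub_self {f : ℝ → ℝ} (hf : IntervalIntegrable f volume 0 c) :
    IntervalIntegrable (fun s => f (c - s)) volume 0 c := by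
  simpa using (hf.comp_sub_left c).symm

lemma MemW.integral_eq_sub {m : ℕ} {u : ℝ → ℝ} (hu : MemW m c u) {x y : ℝ}
    (hx : x ∈ Icc 0 c) (hy : y ∈ Icc 0 c) :
    ∫ s in x..y, iteratedDeriv m u s = iteratedDeriv (m - 1) u y - iteratedDeriv (m - 1) u x := by
  have hint : ∀ z ∈ Icc 0 c, IntervalIntegrable (iteratedDeriv m u) volume 0 z := fun z hz =>
    hu.2.1.mono_set (uIcc_subset_uIcc left_mem_uIcc (mem_uIcc_of_le hz.1 hz.2))
  rw [← intervalIntegral.integral_interval_sub_left (hint y hy) (hint x hx), hu.2.2 y hy,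
    hu.2.2 x hx]
  ring

lemma MemW.comp_const_sub {m : ℕ} (hm : 1 ≤ m) (hc : 0 ≤ c) {u : ℝ → ℝ} (hu : MemW m c u) :
    MemW m c (fun t => u (c - t)) := by
  have hmaps : MapsTo (fun t => c - t) (Icc 0 c) (Icc 0 c) := fun t ht =>
    ⟨by linarith [ht.2], by linarith [ht.1]⟩
  simp only [MemW, iteratedDeriv_comp_const_sub, smul_eq_mul]
  refine ⟨fun k hk => continuousOn_const.mul ((hu.1 k hk).comp (by fun_prop) hmaps), ?_,
    fun t ht => ?_⟩
  · exact hu.2.1.comp_const_sub_self.const_mul _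
  · have hsub : ∫ s in (0 : ℝ)..t, iteratedDeriv m u (c - s)
        = iteratedDeriv (m - 1) u c - iteratedDeriv (m - 1) u (c - t) := by
      rw [intervalIntegral.integral_comp_sub_left (fun s => iteratedDeriv m u s), sub_zero,
        hu.integral_eq_sub (hmaps ht) (right_mem_Icc.2 hc)]
    obtain ⟨j, rfl⟩ := Nat.exists_eq_add_of_le' hm
    rw [intervalIntegral.integral_const_mul, hsub, sub_zero, Nat.add_sub_cancel, pow_succ]
    ring

lemma Lop_comp_const_sub (n : ℕ) {b : ℕ → ℝ → ℝ} (u : ℝ → ℝ) {t : ℝ}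
    (hb : ∀ k, b k (c - t) = (-1) ^ k * b k t) :
    Lop n b (fun x => u (c - x)) t = Lop n b u (c - t) := by
  simp only [Lop, iteratedDeriv_comp_const_sub, smul_eq_mul, pow_mul, neg_one_sq, one_pow,
    one_mul, hb]
  refine congrArg _ (Finset.sum_congr rfl fun k _ => ?_)
  ring

lemma comp_const_sub_mem_XD {n : ℕ} (hn : 1 ≤ n) (hc : 0 ≤ c) {u : ℝ → ℝ} (hu : u ∈ XD n c) :
    (fun x => u (c - x)) ∈ XD n c := by
  refine ⟨hu.1.comp_const_sub (by omega) hc, fun k hk => ?_⟩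
  simp only [iteratedDeriv_comp_const_sub, smul_eq_mul, sub_zero, sub_self, (hu.2 k hk).1,
    (hu.2 k hk).2, mul_zero, and_self]

/-- The reflection `u ↦ u (c - ·)` commutes with the Green operator of a Dirichlet problem whose
coefficients have the parity of their order about `c / 2`. -/
theorem IsGreen.integral_comp_const_sub {n : ℕ} (hn : 1 ≤ n) (hc : 0 ≤ c) {b : ℕ → ℝ → ℝ}
    {G : ℝ → ℝ → ℝ} (hG : IsGreen n b c (XD n c) G)
    (hb : ∀ᵐ t, ∀ k, b k (c - t) = (-1) ^ k * b k t) {σ : ℝ → ℝ}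
    (hσ : IntervalIntegrable σ volume 0 c) {t : ℝ} (ht : t ∈ Icc 0 c) :
    ∫ s in (0 : ℝ)..c, G t s * σ (c - s) = ∫ s in (0 : ℝ)..c, G (c - t) s * σ s := by
  obtain ⟨hmem, hsol, -⟩ := hG.2 _ hσ.comp_const_sub_self
  set v := fun x => ∫ s in (0 : ℝ)..c, G x s * σ (c - s)
  have hsol' : ∀ᵐ x, x ∈ Icc 0 c → Lop n b (fun y => v (c - y)) x = σ x := by
    have hsol_refl :=
      (Measure.measurePreserving_sub_left volume c).quasiMeasurePreserving.ae hsol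
    filter_upwards [hsol_refl, hb] with x hx hbx hxc
    rw [Lop_comp_const_sub n v hbx, hx ⟨by linarith [hxc.2], by linarith [hxc.1]⟩,
      sub_sub_cancel]
  have := hG.2 σ hσ |>.2.2 _ (comp_const_sub_mem_XD hn hc hmem) hsol' (c - t)
    ⟨by linarith [ht.2], by linarith [ht.1]⟩
  simpa only [sub_sub_cancel, v] using this

end Reflection

lemma tildeCoef_two_mul_sub (T : ℝ) (a : ℕ → ℝ → ℝ) (k : ℕ) {t : ℝ} (ht : t ≠ T) :
    tildeCoef T a k (2 * T - t) = (-1) ^ k * tildeCoef T a k t := by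
  rcases ht.lt_or_gt with h | h
  · simp only [tildeCoef, if_neg (show ¬2 * T - t ≤ T by linarith), if_pos h.le,
      sub_sub_cancel]
  · simp only [tildeCoef, if_pos (show 2 * T - t ≤ T by linarith), if_neg (not_le.2 h),
      ← mul_assoc, ← mul_pow, neg_one_mul, neg_neg, one_pow, one_mul]

lemma ae_tildeCoef_two_mul_sub (T : ℝ) (a : ℕ → ℝ → ℝ) :
    ∀ᵐ t, ∀ k, tildeCoef T a k (2 * T - t) = (-1) ^ k * tildeCoef T a k t := by
  filter_upwards [volume.ae_ne T] with t ht k using tildeCoef_two_mul_sub T a k ht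

lemma Lop_tildeCoef_of_le (n : ℕ) {T : ℝ} (a : ℕ → ℝ → ℝ) (u : ℝ → ℝ) {t : ℝ} (ht : t ≤ T) :
    Lop n (tildeCoef T a) u t = Lop n a u t := by
  simp only [Lop, tildeCoef, if_pos ht]

lemma MemW.mono {m : ℕ} {c T : ℝ} {u : ℝ → ℝ} (hu : MemW m c u) (hT : 0 ≤ T) (hTc : T ≤ c) :
    MemW m T u :=
  ⟨fun k hk => (hu.1 k hk).mono (Icc_subset_Icc_right hTc),
    hu.2.1.mono_set (uIcc_subset_uIcc left_mem_uIcc (mem_uIcc_of_le hT hTc)),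
    fun t ht => hu.2.2 t ⟨ht.1, ht.2.trans hTc⟩⟩

lemma iteratedDeriv_odd_eq_zero_of_symm {u : ℝ → ℝ} {T : ℝ}
    (h : (fun x => u (2 * T - x)) =ᶠ[𝓝 T] u) (k : ℕ) : iteratedDeriv (2 * k + 1) u T = 0 := by
  have h' := h.iteratedDeriv_eq (2 * k + 1)
  rw [iteratedDeriv_comp_const_sub] at h'
  dsimp only at h'
  rw [show 2 * T - T = T by ring, smul_eq_mul, pow_succ, pow_mul,
    neg_one_sq, one_pow, one_mul, neg_one_mul] at h'
  linarith

lemma mem_XM2_of_mem_XD_of_symm {n : ℕ} {T : ℝ} (hT : 0 < T) {u : ℝ → ℝ}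
    (hu : u ∈ XD n (2 * T)) (hsym : ∀ x ∈ Icc 0 (2 * T), u (2 * T - x) = u x) :
    u ∈ XM2 n T := by
  have hnhds : (fun x => u (2 * T - x)) =ᶠ[𝓝 T] u :=
    Filter.eventually_of_mem (Icc_mem_nhds hT (by linarith)) hsym
  exact ⟨hu.1.mono hT.le (by linarith), fun k hk =>
    ⟨(hu.2 k hk).1, iteratedDeriv_odd_eq_zero_of_symm hnhds k⟩⟩

lemma eqOn_of_forall_integral_mul_eq {a b : ℝ} (hab : a < b) {g h : ℝ → ℝ}
    (hg : ContinuousOn g (Icc a b)) (hh : ContinuousOn h (Icc a b))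
    (H : ∀ σ, IntervalIntegrable σ volume a b →
      ∫ x in a..b, g x * σ x = ∫ x in a..b, h x * σ x) :
    EqOn g h (Icc a b) := by
  have hd : ContinuousOn (g - h) (Icc a b) := hg.sub hh
  have hIcc : uIcc a b ⊆ Icc a b := (uIcc_of_le hab.le).subset
  have hdu : ContinuousOn (g - h) (uIcc a b) := hd.mono hIcc
  have hdi : IntervalIntegrable (g - h) volume a b := hdu.intervalIntegrable
  have hsq : ∫ x in a..b, (g - h) x * (g - h) x = 0 := by
    calc ∫ x in a..b, (g - h) x * (g - h) x
        = ∫ x in a..b, (g x * (g - h) x - h x * (g - h) x) :=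
          intervalIntegral.integral_congr fun x _ => sub_mul (g x) (h x) ((g - h) x)
      _ = 0 := ?_
    rw [intervalIntegral.integral_sub (hdi.continuousOn_mul (hg.mono hIcc))
      (hdi.continuousOn_mul (hh.mono hIcc)), H _ hdi, sub_self]
  have hsq_ae := (intervalIntegral.integral_eq_zero_iff_of_le_of_nonneg_ae hab.le
    (.of_forall fun x => mul_self_nonneg _) (hdi.continuousOn_mul hdu)).1 hsq
  have hzero : g - h =ᵐ[volume.restrict (Icc a b)] 0 := by
    rw [← Measure.restrict_congr_set Ioc_ae_eq_Icc]
    filter_upwards [hsq_ae] with x hx using mul_self_eq_zero.1 hx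
  intro x hx
  exact sub_eq_zero.1 (Measure.eqOn_Icc_of_ae_eq volume hab.ne hzero hd continuousOn_const hx)

section EvenExtension

variable {T : ℝ} {σ : ℝ → ℝ}

/-- Even extension of `σ` about `T`, except that at `T` itself it is `2 σ T`. -/
noncomputable def evenExt (T : ℝ) (σ : ℝ → ℝ) (s : ℝ) : ℝ :=
  {x | x ≤ T}.indicator σ s + {x | x ≤ T}.indicator σ (2 * T - s)

lemma evenExt_two_mul_sub (s : ℝ) : evenExt T σ (2 * T - s) = evenExt T σ s := by
  rw [evenExt, evenExt, sub_sub_cancel, add_comm]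

lemma evenExt_of_lt {s : ℝ} (hs : s < T) : evenExt T σ s = σ s := by
  rw [evenExt, indicator_of_mem (show s ∈ {x | x ≤ T} from hs.le),
    indicator_of_notMem (show 2 * T - s ∉ {x | x ≤ T} from fun h : 2 * T - s ≤ T => by linarith),
    add_zero]

lemma intervalIntegrable_indicator_le (hT : 0 ≤ T) (hσ : IntervalIntegrable σ volume 0 T) :
    IntervalIntegrable ({x | x ≤ T}.indicator σ) volume 0 (2 * T) := by
  rw [intervalIntegrable_iff_integrableOn_Ioc_of_le (by linarith)]
  refine (integrableOn_indicator_iff (s := Iic T) measurableSet_Iic).2 ?_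
  rw [Iic_inter_Ioc_of_le (by linarith)]
  exact (intervalIntegrable_iff_integrableOn_Ioc_of_le hT).1 hσ

lemma intervalIntegrable_evenExt (hT : 0 ≤ T) (hσ : IntervalIntegrable σ volume 0 T) :
    IntervalIntegrable (evenExt T σ) volume 0 (2 * T) := by
  have hg := intervalIntegrable_indicator_le hT hσ
  exact hg.add hg.comp_const_sub_self

lemma integral_mul_indicator_le (hT : 0 ≤ T) (h : ℝ → ℝ) :
    ∫ s in (0 : ℝ)..2 * T, h s * {x | x ≤ T}.indicator σ s = ∫ s in (0 : ℝ)..T, h s * σ s := by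
  simp only [← indicator_mul_right]
  exact intervalIntegral.integral_indicator ⟨hT, by linarith⟩

variable {n : ℕ} {b : ℕ → ℝ → ℝ} {G : ℝ → ℝ → ℝ}

lemma IsGreen.integral_evenExt (hn : 1 ≤ n) (hT : 0 ≤ T)
    (hG : IsGreen n b (2 * T) (XD n (2 * T)) G)
    (hb : ∀ᵐ t, ∀ k, b k (2 * T - t) = (-1) ^ k * b k t)
    (hσ : IntervalIntegrable σ volume 0 T) {t : ℝ} (ht : t ∈ Icc 0 (2 * T)) :
    ∫ s in (0 : ℝ)..2 * T, G t s * evenExt T σ s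
      = (∫ s in (0 : ℝ)..T, G t s * σ s) + ∫ s in (0 : ℝ)..T, G (2 * T - t) s * σ s := by
  have hg := intervalIntegrable_indicator_le hT hσ
  have hGt : ContinuousOn (G t) (uIcc 0 (2 * T)) := by
    rw [uIcc_of_le (by linarith)]
    exact hG.1.uncurry_left t ht
  simp only [evenExt, mul_add]
  rw [intervalIntegral.integral_add (hg.continuousOn_mul hGt)
      (hg.comp_const_sub_self.continuousOn_mul hGt),
    hG.integral_comp_const_sub hn (by linarith) hb hg ht, integral_mul_indicator_le hT,
    integral_mul_indicator_le hT]

lemma IsGreen.integral_evenExt_symm (hn : 1 ≤ n) (hT : 0 ≤ T)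
    (hG : IsGreen n b (2 * T) (XD n (2 * T)) G)
    (hb : ∀ᵐ t, ∀ k, b k (2 * T - t) = (-1) ^ k * b k t)
    (hσ : IntervalIntegrable σ volume 0 T) {t : ℝ} (ht : t ∈ Icc 0 (2 * T)) :
    ∫ s in (0 : ℝ)..2 * T, G (2 * T - t) s * evenExt T σ s
      = ∫ s in (0 : ℝ)..2 * T, G t s * evenExt T σ s := by
  simpa only [evenExt_two_mul_sub] using
    (hG.integral_comp_const_sub hn (by linarith) hb (intervalIntegrable_evenExt hT hσ) ht).symm

end EvenExtension

theorem integral_green_mixed2_eq {n : ℕ} (hn : 1 ≤ n) {T : ℝ} (hT : 0 < T) {a : ℕ → ℝ → ℝ}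
    {GM2 GD2 : ℝ → ℝ → ℝ} (hGM2 : IsGreen n a T (XM2 n T) GM2)
    (hGD2 : IsGreen n (tildeCoef T a) (2 * T) (XD n (2 * T)) GD2)
    {σ : ℝ → ℝ} (hσ : IntervalIntegrable σ volume 0 T) {t : ℝ} (ht : t ∈ Icc 0 T) :
    ∫ s in (0 : ℝ)..T, GM2 t s * σ s
      = (∫ s in (0 : ℝ)..T, GD2 t s * σ s) + ∫ s in (0 : ℝ)..T, GD2 (2 * T - t) s * σ s := by
  have hb := ae_tildeCoef_two_mul_sub T a
  obtain ⟨hu, hLu, -⟩ := hGD2.2 _ (intervalIntegrable_evenExt hT.le hσ)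
  set u := fun x => ∫ s in (0 : ℝ)..2 * T, GD2 x s * evenExt T σ s
  have huM2 : u ∈ XM2 n T :=
    mem_XM2_of_mem_XD_of_symm hT hu fun x hx => hGD2.integral_evenExt_symm hn hT.le hb hσ hx
  have hLuT : ∀ᵐ x, x ∈ Icc 0 T → Lop n a u x = σ x := by
    filter_upwards [hLu, volume.ae_ne T] with x hx hxT hxI
    rw [← Lop_tildeCoef_of_le n a u hxI.2, hx ⟨hxI.1, by linarith [hxI.2]⟩,
      evenExt_of_lt (lt_of_le_of_ne hxI.2 hxT)]
  rw [← (hGM2.2 σ hσ).2.2 u huM2 hLuT t ht]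
  exact hGD2.integral_evenExt hn hT.le hb hσ ⟨ht.1, by linarith [ht.2]⟩

theorem green_mixed2_dirichlet_general (n : ℕ) (hn : 1 ≤ n) (T : ℝ) (hT : 0 < T)
    (a : ℕ → ℝ → ℝ)
    (GM2 GD2 : ℝ → ℝ → ℝ)
    (hGM2 : IsGreen n a T (XM2 n T) GM2)
    (hGD2 : IsGreen n (tildeCoef T a) (2 * T) (XD n (2 * T)) GD2) :
    ∀ t ∈ Icc 0 T, ∀ s ∈ Icc 0 T,
      GM2 t s = GD2 t s + GD2 (2 * T - t) s := by
  intro t ht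
  have hGD2_slice : ∀ x ∈ Icc 0 (2 * T), ContinuousOn (GD2 x) (uIcc 0 T) := fun x hx => by
    rw [uIcc_of_le hT.le]
    exact (hGD2.1.uncurry_left x hx).mono (Icc_subset_Icc_right (by linarith))
  have hGD2_t := hGD2_slice t ⟨ht.1, by linarith [ht.2]⟩
  have hGD2_t' := hGD2_slice (2 * T - t) ⟨by linarith [ht.2], by linarith [ht.1]⟩
  refine eqOn_of_forall_integral_mul_eq hT (hGM2.1.uncurry_left t ht) ?_ fun σ hσ => ?_
  · rw [← uIcc_of_le hT.le]
    exact hGD2_t.add hGD2_t'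
  · simp only [add_mul]
    rw [integral_green_mixed2_eq hn hT hGM2 hGD2 hσ ht, intervalIntegral.integral_add
      (hσ.continuousOn_mul hGD2_t) (hσ.continuousOn_mul hGD2_t')]

theorem green_mixed2_dirichlet (n : ℕ) (hn : 1 ≤ n) (T : ℝ) (hT : 0 < T)
    (a : ℕ → ℝ → ℝ) (ha : ∀ k < 2 * n, IntervalIntegrable (a k) volume 0 T)
    (GM2 GD2 : ℝ → ℝ → ℝ)
    (hM2res : Nonresonant n a T (XM2 n T))
    (hGM2 : IsGreen n a T (XM2 n T) GM2)
    (hD2res : Nonresonant n (tildeCoef T a) (2 * T) (XD n (2 * T)))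
    (hGD2 : IsGreen n (tildeCoef T a) (2 * T) (XD n (2 * T)) GD2) :
    ∀ t ∈ Icc 0 T, ∀ s ∈ Icc 0 T,
      GM2 t s = GD2 t s + GD2 (2 * T - t) s :=
  green_mixed2_dirichlet_general n hn T hT a GM2 GD2 hGM2 hGD2
end

section
/- Let Ľ be the reflected operator Ľ u(t) = u^{(2n)}(t) + Σ_{k=0}^{2n−1} (−1)^k a_k(T − t) u^{(k)}(t), t ∈ I. Assume L is nonresonant in X_{M1,T} and in X_{M2,T} with Green's functions G_{M1}[T] and G_{M2}[T], and Ľ is nonresonant in X_{M1,T} and in X_{M2,T} with Green's functions Ǧ_{M1}[T] and Ǧ_{M2}[T]. Then G_{M1}[T](T − t, T − s) = Ǧ_{M2}[T](t,s) and G_{M2}[T](T − t, T − s) = Ǧ_{M1}[T](t,s) for all (t,s) ∈ I × I. -/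
open MeasureTheory Set

private lemma iterD_refl (k : ℕ) (f : ℝ → ℝ) (c x : ℝ) :
    iteratedDeriv k (fun t => f (c - t)) x = (-1 : ℝ) ^ k * iteratedDeriv k f (c - x) := by
  have h1 : (fun t : ℝ => f (c - t)) = fun t => (fun z => f (-z)) (t + (-c)) := by
    funext t; congr 1; ring
  have h2 : -(x + -c) = c - x := by ring
  rw [h1, iteratedDeriv_comp_add_const k (fun z => f (-z)) (-c)]
  simp only [iteratedDeriv_comp_neg, h2, smul_eq_mul]

private lemma ae_refl {T : ℝ} {P : ℝ → Prop} (h : ∀ᵐ t ∂volume, t ∈ Icc 0 T → P t) :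
    ∀ᵐ t ∂volume, t ∈ Icc 0 T → P (T - t) := by
  have mp : MeasurePreserving (fun t : ℝ => T - t) volume volume := by
    have := (measurePreserving_add_left (volume : Measure ℝ) T).comp
      (Measure.measurePreserving_neg (volume : Measure ℝ))
    simpa [Function.comp_def, sub_eq_add_neg] using this
  filter_upwards [mp.quasiMeasurePreserving.ae h] with t ht hmem
  exact ht ⟨by linarith [hmem.2], by linarith [hmem.1]⟩

private lemma Lop_refl (n : ℕ) (a : ℕ → ℝ → ℝ) (T : ℝ) (u : ℝ → ℝ) (t : ℝ) :
    Lop n (checkCoef T a) (fun t' => u (T - t')) t = Lop n a u (T - t) := by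
  have hc2 : ((-1 : ℝ)) ^ (2 * n) = 1 := (even_two_mul n).neg_one_pow
  unfold Lop checkCoef
  rw [iterD_refl, hc2, one_mul]
  congr 1
  refine Finset.sum_congr rfl fun k _ => ?_
  rw [iterD_refl, mul_mul_mul_comm, ← pow_add, Even.neg_one_pow ⟨k, by ring⟩, one_mul]

private lemma checkCoef_invol (T : ℝ) (a : ℕ → ℝ → ℝ) :
    checkCoef T (checkCoef T a) = a := by
  funext k t
  simp only [checkCoef, sub_sub_cancel, ← mul_assoc, ← pow_add,
    Even.neg_one_pow (⟨k, by ring⟩ : Even (k + k)), one_mul]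


private lemma iterD_refl' (k : ℕ) (f : ℝ → ℝ) (c : ℝ) :
    iteratedDeriv k (fun t => f (c - t)) = fun x => (-1 : ℝ) ^ k * iteratedDeriv k f (c - x) :=
  funext fun x => iterD_refl k f c x

private lemma mem_XM2_refl {n : ℕ} (hn : 1 ≤ n) {T : ℝ} (hT : 0 < T) {u : ℝ → ℝ}
    (hu : u ∈ XM1 n T) : (fun t => u (T - t)) ∈ XM2 n T := by
  obtain ⟨⟨hcont, hint, hftc⟩, hbc⟩ := hu
  have hmaps : MapsTo (fun x : ℝ => T - x) (Icc 0 T) (Icc 0 T) := by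
    intro x hx
    simp only [mem_Icc] at hx ⊢
    constructor <;> linarith [hx.1, hx.2]
  have hrc : ContinuousOn (fun x : ℝ => T - x) (Icc 0 T) :=
    (continuous_const.sub continuous_id).continuousOn
  have hc1 : ((-1 : ℝ)) ^ (2 * n - 1) = -1 := Odd.neg_one_pow ⟨n - 1, by omega⟩
  have hc2 : ((-1 : ℝ)) ^ (2 * n) = 1 := (even_two_mul n).neg_one_pow
  refine ⟨⟨?_, ?_, ?_⟩, ?_⟩
  · intro k hk
    rw [iterD_refl' k u T]
    exact continuousOn_const.mul ((hcont k hk).comp hrc hmaps)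
  · rw [iterD_refl' (2 * n) u T]
    exact ((by simpa using (hint.comp_sub_left T).symm :
      IntervalIntegrable (fun x => iteratedDeriv (2 * n) u (T - x)) volume 0 T)).const_mul _
  · intro t ht
    rw [iterD_refl' (2 * n - 1) u T, iterD_refl' (2 * n) u T]
    simp only [hc1, hc2, one_mul, neg_one_mul, sub_zero]
    have hTt : T - t ∈ Icc 0 T := hmaps ht
    have hTm : T ∈ Icc 0 T := ⟨hT.le, le_refl T⟩
    have e1 := hftc (T - t) hTt
    have e2 := hftc T hTm
    have hsub : (∫ s in (0:ℝ)..t, iteratedDeriv (2 * n) u (T - s))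
        = ∫ s in (T - t)..T, iteratedDeriv (2 * n) u s := by
      simpa using intervalIntegral.integral_comp_sub_left (iteratedDeriv (2 * n) u) T
        (a := 0) (b := t)
    have hi1 : IntervalIntegrable (iteratedDeriv (2 * n) u) volume 0 (T - t) := by
      apply hint.mono_set
      rw [uIcc_of_le (by linarith [ht.2] : (0:ℝ) ≤ T - t), uIcc_of_le hT.le]
      exact Icc_subset_Icc le_rfl (by linarith [ht.1])
    have hi2 : IntervalIntegrable (iteratedDeriv (2 * n) u) volume (T - t) T := by
      apply hint.mono_set
      rw [uIcc_of_le (by linarith [ht.1] : T - t ≤ T), uIcc_of_le hT.le]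
      exact Icc_subset_Icc (by linarith [ht.2]) le_rfl
    have hadd := intervalIntegral.integral_add_adjacent_intervals hi1 hi2
    rw [hsub]
    linarith [e1, e2, hadd]
  · intro k hk
    constructor
    · rw [iterD_refl]
      simp only [sub_zero, Even.neg_one_pow (even_two_mul k), one_mul]
      exact (hbc k hk).2
    · rw [iterD_refl]
      simp [sub_self, (hbc k hk).1]

private lemma key (n : ℕ) (hn : 1 ≤ n) (T : ℝ) (hT : 0 < T) (a : ℕ → ℝ → ℝ)
    (G1 G2 : ℝ → ℝ → ℝ)
    (hG1 : IsGreen n a T (XM1 n T) G1)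
    (hG2 : IsGreen n (checkCoef T a) T (XM2 n T) G2) :
    ∀ t ∈ Icc 0 T, ∀ s ∈ Icc 0 T, G1 (T - t) (T - s) = G2 t s := by
  intro t ht
  have hTt : T - t ∈ Icc 0 T := ⟨by linarith [ht.2], by linarith [ht.1]⟩
  have huicc : uIcc (0:ℝ) T = Icc 0 T := uIcc_of_le hT.le
  have hcont1 : ContinuousOn (fun s => G1 (T - t) (T - s)) (Icc 0 T) := by
    apply hG1.1.comp (Continuous.continuousOn (by fun_prop) :
      ContinuousOn (fun s : ℝ => ((T - t : ℝ), (T - s : ℝ))) (Icc 0 T))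
    intro s hs
    exact ⟨hTt, by constructor <;> simp only [mem_Icc] at hs ⊢ <;> linarith [hs.1, hs.2]⟩
  have hcont2 : ContinuousOn (fun s => G2 t s) (Icc 0 T) := by
    apply hG2.1.comp (Continuous.continuousOn (by fun_prop) :
      ContinuousOn (fun s : ℝ => ((t : ℝ), (s : ℝ))) (Icc 0 T))
    exact fun s hs => ⟨ht, hs⟩
  set h : ℝ → ℝ := fun s => G1 (T - t) (T - s) - G2 t s with hh
  have hconth : ContinuousOn h (Icc 0 T) := hcont1.sub hcont2
  have hzero : ∀ σ : ℝ → ℝ, IntervalIntegrable σ volume 0 T →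
      ∫ s in (0:ℝ)..T, h s * σ s = 0 := by
    intro σ hσ
    have hσc : IntervalIntegrable (fun s => σ (T - s)) volume 0 T := by
      simpa using (hσ.comp_sub_left T).symm
    obtain ⟨huX, huL, _⟩ := hG1.2 (fun s => σ (T - s)) hσc
    obtain ⟨_, _, huniq⟩ := hG2.2 σ hσ
    set u : ℝ → ℝ := fun t' => ∫ s in (0:ℝ)..T, G1 t' s * σ (T - s) with hu
    have hvX : (fun t' => u (T - t')) ∈ XM2 n T := mem_XM2_refl hn hT huX
    have hvL : ∀ᵐ t' ∂volume, t' ∈ Icc 0 T →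
        Lop n (checkCoef T a) (fun t'' => u (T - t'')) t' = σ t' := by
      filter_upwards [ae_refl huL] with t' ht' hmem
      rw [Lop_refl]
      simpa [sub_sub_cancel] using ht' hmem
    have huniq' := huniq _ hvX hvL t ht
    have hchg : u (T - t) = ∫ s in (0:ℝ)..T, G1 (T - t) (T - s) * σ s := by
      have := intervalIntegral.integral_comp_sub_left
        (fun x => G1 (T - t) (T - x) * σ x) T (a := 0) (b := T)
      simp only [sub_sub_cancel, sub_zero, sub_self] at this
      simpa [hu] using this
    have hint1 : IntervalIntegrable (fun s => G1 (T - t) (T - s) * σ s) volume 0 T :=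
      hσ.continuousOn_mul (huicc ▸ hcont1)
    have hint2 : IntervalIntegrable (fun s => G2 t s * σ s) volume 0 T :=
      hσ.continuousOn_mul (huicc ▸ hcont2)
    have : (∫ s in (0:ℝ)..T, G1 (T - t) (T - s) * σ s)
        = ∫ s in (0:ℝ)..T, G2 t s * σ s := by
      rw [← hchg, huniq']
    calc ∫ s in (0:ℝ)..T, h s * σ s
        = ∫ s in (0:ℝ)..T, (G1 (T - t) (T - s) * σ s - G2 t s * σ s) := by
          apply intervalIntegral.integral_congr
          intro s _
          simp [hh]; ring
      _ = (∫ s in (0:ℝ)..T, G1 (T - t) (T - s) * σ s)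
            - ∫ s in (0:ℝ)..T, G2 t s * σ s := intervalIntegral.integral_sub hint1 hint2
      _ = 0 := by rw [this, sub_self]
  intro s hs
  have hinth : IntervalIntegrable h volume 0 T := hconth.intervalIntegrable_of_Icc hT.le
  have hzz := hzero h hinth
  have hnn : 0 ≤ᵐ[volume.restrict (Ioc 0 T)] fun s => h s * h s :=
    ae_of_all _ fun s => mul_self_nonneg _
  have hsq : IntervalIntegrable (fun s => h s * h s) volume 0 T :=
    hinth.continuousOn_mul (huicc ▸ hconth)
  have h0 := (intervalIntegral.integral_eq_zero_iff_of_le_of_nonneg_ae hT.le hnn hsq).mp hzz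
  have h0' : h =ᵐ[volume.restrict (Icc 0 T)] 0 := by
    rw [Measure.restrict_congr_set Ioc_ae_eq_Icc] at h0
    filter_upwards [h0] with x hx
    exact mul_self_eq_zero.mp hx
  have heq : EqOn h 0 (Icc 0 T) :=
    Measure.eqOn_of_ae_eq h0' hconth continuousOn_const
      (by rw [interior_Icc, closure_Ioo hT.ne])
  have := heq hs
  simpa [hh, sub_eq_zero] using this

theorem green_mixed_reflection (n : ℕ) (hn : 1 ≤ n) (T : ℝ) (hT : 0 < T)
    (a : ℕ → ℝ → ℝ) (ha : ∀ k < 2 * n, IntervalIntegrable (a k) volume 0 T)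
    (GM1 GM2 GcM1 GcM2 : ℝ → ℝ → ℝ)
    (hM1res : Nonresonant n a T (XM1 n T))
    (hGM1 : IsGreen n a T (XM1 n T) GM1)
    (hM2res : Nonresonant n a T (XM2 n T))
    (hGM2 : IsGreen n a T (XM2 n T) GM2)
    (hcM1res : Nonresonant n (checkCoef T a) T (XM1 n T))
    (hGcM1 : IsGreen n (checkCoef T a) T (XM1 n T) GcM1)
    (hcM2res : Nonresonant n (checkCoef T a) T (XM2 n T))
    (hGcM2 : IsGreen n (checkCoef T a) T (XM2 n T) GcM2) :
    ∀ t ∈ Icc 0 T, ∀ s ∈ Icc 0 T,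
      GM1 (T - t) (T - s) = GcM2 t s ∧ GM2 (T - t) (T - s) = GcM1 t s := by
  intro t ht s hs
  have hGM2' : IsGreen n (checkCoef T (checkCoef T a)) T (XM2 n T) GM2 := by
    rw [checkCoef_invol]; exact hGM2
  refine ⟨key n hn T hT a GM1 GcM2 hGM1 hGcM2 t ht s hs, ?_⟩
  have hTt : T - t ∈ Icc 0 T := ⟨by linarith [ht.2], by linarith [ht.1]⟩
  have hTs : T - s ∈ Icc 0 T := ⟨by linarith [hs.2], by linarith [hs.1]⟩
  have h2 := key n hn T hT (checkCoef T a) GcM1 GM2 hGcM1 hGM2' (T - t) hTt (T - s) hTs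
  simpa [sub_sub_cancel] using h2.symm
end

section
/- If the coefficients of L satisfy a_k(t) = (−1)^k a_k(T − t) for a.e. t ∈ I and all k = 0,…,2n−1, then the spectra of the two mixed problems coincide: Λ_{M1}[T] = Λ_{M2}[T]. -/
open MeasureTheory Set

/-!
Reflection `u ↦ u (T - ·)` multiplies the `k`-th derivative by `(-1)^k` and swaps the endpoints,
so it exchanges the boundary conditions of `X_{M1}` and `X_{M2}`. Under the symmetry
`a_k(t) = (-1)^k a_k(T - t)` it also commutes with `L`, hence it carries the eigenfunctions of
either mixed problem to eigenfunctions of the other with the same eigenvalue.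
-/

lemma mapsTo_const_sub_Icc (T : ℝ) : MapsTo (fun t : ℝ => T - t) (Icc 0 T) (Icc 0 T) :=
  fun _ ht => ⟨by linarith [ht.2], by linarith [ht.1]⟩

lemma memW_comp_const_sub {m : ℕ} (hm : m ≠ 0) {T : ℝ} {u : ℝ → ℝ} (hu : MemW m T u) :
    MemW m T (fun t => u (T - t)) := by
  obtain ⟨hcont, hint, hftc⟩ := hu
  simp only [MemW, iteratedDeriv_comp_const_sub, smul_eq_mul, sub_zero]
  refine ⟨fun k hk => continuousOn_const.mul ((hcont k hk).comp (by fun_prop)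
    (mapsTo_const_sub_Icc T)), ?_, fun t ht => ?_⟩
  · simpa using (hint.comp_sub_left T).symm.const_mul ((-1 : ℝ) ^ m)
  · have hTt : T - t ∈ Icc 0 T := mapsTo_const_sub_Icc T ht
    have hT : T ∈ Icc 0 T := ⟨ht.1.trans ht.2, le_rfl⟩
    have htail : ∫ s in (T - t)..T, iteratedDeriv m u s
        = (∫ s in (0 : ℝ)..T, iteratedDeriv m u s) - ∫ s in (0 : ℝ)..(T - t), iteratedDeriv m u s :=
      (intervalIntegral.integral_interval_sub_left hint
        (hint.mono_set (uIcc_subset_uIcc left_mem_uIcc (Icc_subset_uIcc hTt)))).symm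
    have hsign : (-1 : ℝ) ^ m = -(-1) ^ (m - 1) := by
      obtain ⟨m, rfl⟩ := Nat.exists_eq_succ_of_ne_zero hm
      simp [pow_succ]
    rw [intervalIntegral.integral_const_mul, intervalIntegral.integral_comp_sub_left, sub_zero,
      htail, hsign, hftc _ hTt, hftc _ hT]
    ring

lemma comp_const_sub_mem_XM2 {n : ℕ} (hn : n ≠ 0) {T : ℝ} {u : ℝ → ℝ} (hu : u ∈ XM1 n T) :
    (fun t => u (T - t)) ∈ XM2 n T := by
  refine ⟨memW_comp_const_sub (by omega) hu.1, fun k hk => ?_⟩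
  simp [iteratedDeriv_comp_const_sub, (hu.2 k hk).1, (hu.2 k hk).2]

lemma comp_const_sub_mem_XM1 {n : ℕ} (hn : n ≠ 0) {T : ℝ} {u : ℝ → ℝ} (hu : u ∈ XM2 n T) :
    (fun t => u (T - t)) ∈ XM1 n T := by
  refine ⟨memW_comp_const_sub (by omega) hu.1, fun k hk => ?_⟩
  simp [iteratedDeriv_comp_const_sub, (hu.2 k hk).1, (hu.2 k hk).2]

lemma lop_comp_const_sub {n : ℕ} {a : ℕ → ℝ → ℝ} {T t : ℝ} (u : ℝ → ℝ)
    (hsym : ∀ k < 2 * n, a k t = (-1 : ℝ) ^ k * a k (T - t)) :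
    Lop n a (fun s => u (T - s)) t = Lop n a u (T - t) := by
  simp only [Lop, iteratedDeriv_comp_const_sub, smul_eq_mul]
  congr 1
  · simp [pow_mul]
  · refine Finset.sum_congr rfl fun k hk => ?_
    rw [hsym k (Finset.mem_range.mp hk)]
    have hsq : (-1 : ℝ) ^ k * (-1) ^ k = 1 := by rw [← pow_add]; exact Even.neg_one_pow ⟨k, rfl⟩
    linear_combination a k (T - t) * iteratedDeriv k u (T - t) * hsq

section

variable {n : ℕ} {a : ℕ → ℝ → ℝ} {T : ℝ} {X Y : Set (ℝ → ℝ)}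

lemma IsEigenfun.comp_const_sub {lam : ℝ} {u : ℝ → ℝ} (hu : IsEigenfun n a T X lam u)
    (hXY : ∀ v ∈ X, (fun t => v (T - t)) ∈ Y)
    (hsym : ∀ᵐ t ∂volume, t ∈ Icc 0 T → ∀ k < 2 * n, a k t = (-1 : ℝ) ^ k * a k (T - t)) :
    IsEigenfun n a T Y lam (fun t => u (T - t)) := by
  obtain ⟨huX, ⟨t₀, ht₀, hut₀⟩, heq⟩ := hu
  refine ⟨hXY u huX, ⟨T - t₀, mapsTo_const_sub_Icc T ht₀, by simpa using hut₀⟩, ?_⟩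
  have heq' := (Measure.measurePreserving_sub_left volume T).quasiMeasurePreserving.ae heq
  filter_upwards [heq', hsym] with t heqt hsymt ht
  rw [lop_comp_const_sub u (hsymt ht)]
  exact heqt (mapsTo_const_sub_Icc T ht)

lemma specSet_subset_of_comp_const_sub (hXY : ∀ v ∈ X, (fun t => v (T - t)) ∈ Y)
    (hsym : ∀ᵐ t ∂volume, t ∈ Icc 0 T → ∀ k < 2 * n, a k t = (-1 : ℝ) ^ k * a k (T - t)) :
    SpecSet n a T X ⊆ SpecSet n a T Y :=
  fun _ ⟨_, hu⟩ => ⟨_, hu.comp_const_sub hXY hsym⟩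

end

theorem mixed_spectra_coincide_general (n : ℕ) (hn : 1 ≤ n) (T : ℝ)
    (a : ℕ → ℝ → ℝ)
    (hsym : ∀ᵐ t ∂volume, t ∈ Icc 0 T →
      ∀ k < 2 * n, a k t = (-1 : ℝ) ^ k * a k (T - t)) :
    SpecSet n a T (XM1 n T) = SpecSet n a T (XM2 n T) :=
  Subset.antisymm
    (specSet_subset_of_comp_const_sub (fun _ => comp_const_sub_mem_XM2 (by omega)) hsym)
    (specSet_subset_of_comp_const_sub (fun _ => comp_const_sub_mem_XM1 (by omega)) hsym)

theorem mixed_spectra_coincide (n : ℕ) (hn : 1 ≤ n) (T : ℝ) (hT : 0 < T)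
    (a : ℕ → ℝ → ℝ) (ha : ∀ k < 2 * n, IntervalIntegrable (a k) volume 0 T)
    (hsym : ∀ᵐ t ∂volume, t ∈ Icc 0 T →
      ∀ k < 2 * n, a k t = (-1 : ℝ) ^ k * a k (T - t)) :
    SpecSet n a T (XM1 n T) = SpecSet n a T (XM2 n T) :=
  mixed_spectra_coincide_general n hn T a hsym
end

section
/- Assume L is nonresonant in X_{N,T}, X_{D,T} and X_{M2,T} with Green's functions G_N[T], G_D[T], G_{M2}[T], and L̃ is nonresonant in X_{P,2T}, X_{N,2T} and X_{D,2T} with Green's functions G_P[2T], G_N[2T], G_D[2T]. Then: (1) if G_P[2T] ≤ 0 on J × J, then G_N[T] ≤ 0 on I × I; (2) if G_P[2T] ≥ 0 on J × J, then G_N[T] ≥ 0 on I × I; (3) if G_N[2T] ≤ 0 on J × J, then G_N[T] ≤ 0 on I × I; (4) if G_N[2T] ≥ 0 on J × J, then G_N[T] ≥ 0 on I × I; (5) if G_D[2T] ≤ 0 on J × J, then G_{M2}[T] ≤ 0 on I × I; (6) if G_D[2T] ≥ 0 on J × J, then G_{M2}[T] ≥ 0 on I × I. -/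
open MeasureTheory Set

/-! ### Auxiliary lemmas -/

lemma aux_iteratedDeriv_reflect (k : ℕ) (f : ℝ → ℝ) (c t : ℝ) :
    iteratedDeriv k (fun x => f (c - x)) t = (-1 : ℝ) ^ k * iteratedDeriv k f (c - t) := by
  set g : ℝ → ℝ := fun z => f (c + z) with hg
  have h1 : (fun x : ℝ => f (c - x)) = fun x : ℝ => g (-x) := by
    funext x; simp [hg, sub_eq_add_neg]
  rw [h1, iteratedDeriv_comp_neg, hg, iteratedDeriv_comp_const_add]
  simp [smul_eq_mul, sub_eq_add_neg]

lemma aux_memW_restrict {m : ℕ} {T : ℝ} (hT : 0 ≤ T) {u : ℝ → ℝ}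
    (h : MemW m (2 * T) u) : MemW m T u := by
  obtain ⟨h1, h2, h3⟩ := h
  have hsub : Icc (0:ℝ) T ⊆ Icc 0 (2*T) := Icc_subset_Icc le_rfl (by linarith)
  refine ⟨fun k hk => (h1 k hk).mono hsub, ?_, fun t ht => h3 t (hsub ht)⟩
  exact h2.mono_set (by rw [uIcc_of_le hT, uIcc_of_le (by linarith : (0:ℝ) ≤ 2*T)]; exact hsub)

lemma aux_memW_reflect {m : ℕ} (hm : 1 ≤ m) {c : ℝ} (hc : 0 ≤ c) {u : ℝ → ℝ}
    (h : MemW m c u) : MemW m c (fun t => u (c - t)) := by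
  obtain ⟨h1, h2, h3⟩ := h
  have hmaps : ∀ t ∈ Icc (0:ℝ) c, c - t ∈ Icc (0:ℝ) c := fun t ht =>
    ⟨by linarith [ht.2], by linarith [ht.1]⟩
  obtain ⟨p, rfl⟩ : ∃ p, m = p + 1 := ⟨m - 1, (Nat.succ_pred_eq_of_pos hm).symm⟩
  have e2 : iteratedDeriv (p+1) (fun t => u (c - t))
      = fun s => (-1:ℝ)^(p+1) * iteratedDeriv (p+1) u (c - s) :=
    funext fun s => aux_iteratedDeriv_reflect _ u c s
  refine ⟨?_, ?_, ?_⟩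
  · intro k hk
    have hco : ContinuousOn (fun t => (-1:ℝ)^k * iteratedDeriv k u (c - t)) (Icc 0 c) :=
      continuousOn_const.mul ((h1 k hk).comp
        ((continuous_const.sub continuous_id).continuousOn) hmaps)
    exact hco.congr fun t _ => aux_iteratedDeriv_reflect k u c t
  · have base : IntervalIntegrable (fun x => iteratedDeriv (p+1) u (c - x)) volume 0 c := by
      simpa using (h2.comp_sub_left c).symm
    rw [e2]
    exact base.const_mul _
  · intro t ht
    have e1 : ∀ s : ℝ, iteratedDeriv p (fun t => u (c - t)) s
        = (-1:ℝ)^p * iteratedDeriv p u (c - s) := fun s => aux_iteratedDeriv_reflect p u c s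
    simp only [Nat.add_sub_cancel] at h3 ⊢
    rw [e1 t, e1 0, e2, sub_zero]
    have hct : c - t ∈ Icc (0:ℝ) c := hmaps t ht
    have hu1 := h3 (c - t) hct
    have hu2 := h3 c (right_mem_Icc.2 hc)
    have hint : (∫ s in (0:ℝ)..t, (-1:ℝ)^(p+1) * iteratedDeriv (p+1) u (c - s))
        = (-1:ℝ)^(p+1) * ∫ s in (c - t)..c, iteratedDeriv (p+1) u s := by
      rw [intervalIntegral.integral_const_mul, intervalIntegral.integral_comp_sub_left]
      norm_num
    have hadj : (∫ s in (0:ℝ)..(c-t), iteratedDeriv (p+1) u s)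
        + (∫ s in (c-t)..c, iteratedDeriv (p+1) u s)
        = ∫ s in (0:ℝ)..c, iteratedDeriv (p+1) u s := by
      apply intervalIntegral.integral_add_adjacent_intervals
      · exact h2.mono_set (by
          rw [uIcc_of_le hct.1, uIcc_of_le hc]; exact Icc_subset_Icc le_rfl hct.2)
      · exact h2.mono_set (by
          rw [uIcc_of_le (by linarith [hct.2] : c - t ≤ c), uIcc_of_le hc]
          exact Icc_subset_Icc hct.1 le_rfl)
    rw [hint, hu1, hu2, ← hadj]
    ring

lemma aux_symm_iteratedDeriv {u : ℝ → ℝ} {c : ℝ} (hsym : ∀ t ∈ Icc 0 c, u t = u (c - t))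
    {t : ℝ} (ht : t ∈ Ioo (0:ℝ) c) (k : ℕ) :
    iteratedDeriv k u t = (-1:ℝ)^k * iteratedDeriv k u (c - t) := by
  have h1 : u =ᶠ[nhds t] fun x => u (c - x) := by
    filter_upwards [Icc_mem_nhds ht.1 ht.2] with x hx using hsym x hx
  rw [h1.iteratedDeriv_eq k, aux_iteratedDeriv_reflect]

lemma aux_odd_mid {u : ℝ → ℝ} {T : ℝ} (hT : 0 < T)
    (hsym : ∀ t ∈ Icc 0 (2*T), u t = u (2*T - t)) (k : ℕ) (hk : Odd k) :
    iteratedDeriv k u T = 0 := by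
  have h := aux_symm_iteratedDeriv hsym (t := T) ⟨hT, by linarith⟩ k
  rw [hk.neg_one_pow] at h
  have h2T : 2*T - T = T := by ring
  rw [h2T] at h
  linarith

lemma aux_symm_endpoint {u : ℝ → ℝ} {c : ℝ} (hc : 0 < c) (k : ℕ)
    (hcont : ContinuousOn (iteratedDeriv k u) (Icc 0 c))
    (hsym : ∀ t ∈ Icc 0 c, u t = u (c - t)) :
    iteratedDeriv k u 0 = (-1:ℝ)^k * iteratedDeriv k u c := by
  set f := iteratedDeriv k u with hf
  have hne : (nhdsWithin (0:ℝ) (Ioo (0:ℝ) c)).NeBot := by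
    rw [nhdsWithin_Ioo_eq_nhdsGT hc]; infer_instance
  have l1 : Filter.Tendsto f (nhdsWithin (0:ℝ) (Ioo (0:ℝ) c)) (nhds (f 0)) :=
    (hcont 0 ⟨le_rfl, hc.le⟩).mono_left (nhdsWithin_mono _ Ioo_subset_Icc_self)
  have hmap : Filter.Tendsto (fun t : ℝ => c - t) (nhdsWithin (0:ℝ) (Ioo (0:ℝ) c))
      (nhdsWithin c (Icc (0:ℝ) c)) := by
    apply tendsto_nhdsWithin_of_tendsto_nhds_of_eventually_within
    · have hcs : Filter.Tendsto (fun t : ℝ => c - t) (nhds 0) (nhds c) := by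
        exact (continuous_const.sub continuous_id).tendsto' 0 c (by simp)
      exact hcs.mono_left nhdsWithin_le_nhds
    · filter_upwards [self_mem_nhdsWithin] with x hx
      exact ⟨by linarith [hx.2], by linarith [hx.1]⟩
  have l3 : Filter.Tendsto f (nhdsWithin c (Icc (0:ℝ) c)) (nhds (f c)) :=
    hcont c ⟨hc.le, le_rfl⟩
  have l2 : Filter.Tendsto (fun t => (-1:ℝ)^k * f (c - t))
      (nhdsWithin (0:ℝ) (Ioo (0:ℝ) c)) (nhds ((-1:ℝ)^k * f c)) :=
    (l3.comp hmap).const_mul _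
  have heq : f =ᶠ[nhdsWithin (0:ℝ) (Ioo (0:ℝ) c)] fun t => (-1:ℝ)^k * f (c - t) := by
    filter_upwards [self_mem_nhdsWithin] with x hx
    exact aux_symm_iteratedDeriv hsym hx k
  exact tendsto_nhds_unique (l1.congr' heq) l2

lemma aux_tildeCoef_reflect (T : ℝ) (a : ℕ → ℝ → ℝ) (k : ℕ) {t : ℝ} (ht : t ≠ T) :
    tildeCoef T a k (2*T - t) = (-1:ℝ)^k * tildeCoef T a k t := by
  rcases lt_or_gt_of_ne ht with h | h
  · have h2 : ¬(2*T - t ≤ T) := by simp; linarith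
    have h3 : 2*T - (2*T - t) = t := by ring
    simp only [tildeCoef]
    rw [if_neg h2, h3, if_pos h.le]
  · have h2 : 2*T - t ≤ T := by linarith
    simp only [tildeCoef]
    rw [if_pos h2, if_neg (not_le.2 h), ← mul_assoc, ← pow_add,
      Even.neg_one_pow ⟨k, rfl⟩, one_mul]

lemma aux_Lop_reflect (n : ℕ) (T : ℝ) (a : ℕ → ℝ → ℝ) (u : ℝ → ℝ) {t : ℝ} (ht : t ≠ T) :
    Lop n (tildeCoef T a) (fun x => u (2*T - x)) t = Lop n (tildeCoef T a) u (2*T - t) := by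
  simp only [Lop]
  congr 1
  · rw [aux_iteratedDeriv_reflect, pow_mul]; norm_num
  · apply Finset.sum_congr rfl
    intro k _
    rw [aux_iteratedDeriv_reflect, aux_tildeCoef_reflect T a k ht]
    ring

lemma aux_evenext_reflect (T : ℝ) (σ : ℝ → ℝ) (t : ℝ) :
    (if 2*T - t ≤ T then σ (2*T - t) else σ (2*T - (2*T - t)))
      = (if t ≤ T then σ t else σ (2*T - t)) := by
  rcases lt_trichotomy t T with h | rfl | h
  · rw [if_neg (by simp; linarith), if_pos h.le]
    congr 1; ring
  · rw [if_pos (by linarith), if_pos le_rfl]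
    congr 1; ring
  · rw [if_pos (by linarith), if_neg (not_le.2 h)]

lemma aux_evenext_continuous {T : ℝ} {σ : ℝ → ℝ} (hσ : Continuous σ) :
    Continuous (fun s => if s ≤ T then σ s else σ (2*T - s)) := by
  have h2 : Continuous fun s : ℝ => σ (2*T - s) := by fun_prop
  apply Continuous.if_le hσ h2 continuous_id continuous_const
  intro x hx
  simp only [id_eq] at hx
  rw [hx]; congr 1; ring

/-! ### Reflection invariance of the boundary-condition spaces on `[0,c]` -/

lemma aux_refl_XN {n : ℕ} (hn : 1 ≤ n) {c : ℝ} (hc : 0 ≤ c) {u : ℝ → ℝ}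
    (hu : u ∈ XN n c) : (fun t => u (c - t)) ∈ XN n c := by
  obtain ⟨hW, hbc⟩ := hu
  refine ⟨aux_memW_reflect (by omega) hc hW, fun k hk => ?_⟩
  constructor
  · rw [aux_iteratedDeriv_reflect, sub_zero, (hbc k hk).2, mul_zero]
  · rw [aux_iteratedDeriv_reflect, sub_self, (hbc k hk).1, mul_zero]

lemma aux_refl_XD {n : ℕ} (hn : 1 ≤ n) {c : ℝ} (hc : 0 ≤ c) {u : ℝ → ℝ}
    (hu : u ∈ XD n c) : (fun t => u (c - t)) ∈ XD n c := by
  obtain ⟨hW, hbc⟩ := hu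
  refine ⟨aux_memW_reflect (by omega) hc hW, fun k hk => ?_⟩
  constructor
  · rw [aux_iteratedDeriv_reflect, sub_zero, (hbc k hk).2, mul_zero]
  · rw [aux_iteratedDeriv_reflect, sub_self, (hbc k hk).1, mul_zero]

lemma aux_refl_XP {n : ℕ} (hn : 1 ≤ n) {c : ℝ} (hc : 0 ≤ c) {u : ℝ → ℝ}
    (hu : u ∈ XP n c) : (fun t => u (c - t)) ∈ XP n c := by
  obtain ⟨hW, hbc⟩ := hu
  refine ⟨aux_memW_reflect (by omega) hc hW, fun k hk => ?_⟩
  rw [aux_iteratedDeriv_reflect, aux_iteratedDeriv_reflect, sub_zero, sub_self, hbc k hk]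

/-! ### Boundary conditions of the restriction to `[0,T]` -/

lemma aux_bc_NN {n : ℕ} (hn : 1 ≤ n) {T : ℝ} (hT : 0 < T) {u : ℝ → ℝ}
    (hu : u ∈ XN n (2*T)) (hsym : ∀ t ∈ Icc 0 (2*T), u t = u (2*T - t)) :
    u ∈ XN n T := by
  obtain ⟨hW, hbc⟩ := hu
  exact ⟨aux_memW_restrict hT.le hW, fun k hk =>
    ⟨(hbc k hk).1, aux_odd_mid hT hsym _ ⟨k, rfl⟩⟩⟩

lemma aux_bc_DM {n : ℕ} (hn : 1 ≤ n) {T : ℝ} (hT : 0 < T) {u : ℝ → ℝ}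
    (hu : u ∈ XD n (2*T)) (hsym : ∀ t ∈ Icc 0 (2*T), u t = u (2*T - t)) :
    u ∈ XM2 n T := by
  obtain ⟨hW, hbc⟩ := hu
  exact ⟨aux_memW_restrict hT.le hW, fun k hk =>
    ⟨(hbc k hk).1, aux_odd_mid hT hsym _ ⟨k, rfl⟩⟩⟩

lemma aux_bc_PN {n : ℕ} (hn : 1 ≤ n) {T : ℝ} (hT : 0 < T) {u : ℝ → ℝ}
    (hu : u ∈ XP n (2*T)) (hsym : ∀ t ∈ Icc 0 (2*T), u t = u (2*T - t)) :
    u ∈ XN n T := by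
  obtain ⟨hW, hbc⟩ := hu
  refine ⟨aux_memW_restrict hT.le hW, fun k hk => ?_⟩
  have hodd : Odd (2*k+1) := ⟨k, rfl⟩
  have hend : iteratedDeriv (2*k+1) u 0 = (-1:ℝ)^(2*k+1) * iteratedDeriv (2*k+1) u (2*T) :=
    aux_symm_endpoint (by linarith) _ (hW.1 _ (by omega)) hsym
  rw [hodd.neg_one_pow, ← hbc _ (by omega)] at hend
  have h0 : iteratedDeriv (2*k+1) u 0 = 0 := by linarith
  exact ⟨h0, aux_odd_mid hT hsym _ hodd⟩

/-! ### The main engine -/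

lemma aux_engine (n : ℕ) (T : ℝ) (hT : 0 < T) (a : ℕ → ℝ → ℝ)
    (X1 : Set (ℝ → ℝ)) (G1 : ℝ → ℝ → ℝ) (hG1 : IsGreen n a T X1 G1)
    (X2 : Set (ℝ → ℝ)) (G2 : ℝ → ℝ → ℝ)
    (hG2 : IsGreen n (tildeCoef T a) (2*T) X2 G2)
    (hrefl : ∀ u ∈ X2, (fun t => u (2*T - t)) ∈ X2)
    (hbc : ∀ u ∈ X2, (∀ t ∈ Icc 0 (2*T), u t = u (2*T - t)) → u ∈ X1)
    (sg : ℝ)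
    (hsign : ∀ t ∈ Icc 0 (2*T), ∀ s ∈ Icc 0 (2*T), sg * G2 t s ≤ 0) :
    ∀ t ∈ Icc 0 T, ∀ s ∈ Icc 0 T, sg * G1 t s ≤ 0 := by
  intro t0 ht0 s0 hs0
  by_contra hcon
  push_neg at hcon
  -- continuity of the slice of G1
  have hslice : ContinuousOn (fun s => G1 t0 s) (Icc 0 T) :=
    hG1.1.comp ((continuous_const.prodMk continuous_id).continuousOn)
      (fun s hs => ⟨ht0, hs⟩)
  have hcw : ContinuousWithinAt (fun s => sg * G1 t0 s) (Icc 0 T) s0 :=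
    (continuousOn_const.mul hslice) s0 hs0
  set E := sg * G1 t0 s0 with hE
  have hev : (fun s => sg * G1 t0 s) ⁻¹' (Ioi (E/2)) ∈ nhdsWithin s0 (Icc 0 T) :=
    hcw (Ioi_mem_nhds (by linarith))
  rw [Metric.mem_nhdsWithin_iff] at hev
  obtain ⟨δ, hδ, hball⟩ := hev
  set α := max (s0 - δ/2) 0 with hα
  set β := min (s0 + δ/2) T with hβ
  have h0α : (0:ℝ) ≤ α := le_max_right _ _
  have hβT : β ≤ T := min_le_right _ _
  have hαβ : α < β := by
    have h1 := hs0.1; have h2 := hs0.2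
    exact max_lt (lt_min (by linarith) (by linarith)) (lt_min (by linarith) hT)
  -- the tent function
  set σ : ℝ → ℝ := fun s => max 0 (δ/2 - |s - s0|) with hσdef
  have hσcont : Continuous σ :=
    continuous_const.max (continuous_const.sub
      (continuous_abs.comp (continuous_id.sub continuous_const)))
  have hσnn : ∀ s, 0 ≤ σ s := fun s => le_max_left _ _
  have hσint : IntervalIntegrable σ volume 0 T := hσcont.intervalIntegrable _ _
  -- pointwise lower bound
  have hptwise : ∀ s ∈ Icc (0:ℝ) T, (E/2) * σ s ≤ sg * (G1 t0 s * σ s) := by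
    intro s hs
    rcases eq_or_lt_of_le (hσnn s) with h0 | h0
    · rw [← h0, mul_zero, mul_zero, mul_zero]
    · have hpos : 0 < δ/2 - |s - s0| := by
        by_contra hng
        push_neg at hng
        have hz : σ s = 0 := max_eq_left (by linarith)
        rw [hz] at h0; exact lt_irrefl 0 h0
      have hlt : E/2 < sg * G1 t0 s := by
        apply hball
        refine ⟨?_, hs⟩
        rw [Metric.mem_ball, Real.dist_eq]
        have habs := abs_nonneg (s - s0)
        linarith
      calc (E/2) * σ s ≤ (sg * G1 t0 s) * σ s := mul_le_mul_of_nonneg_right hlt.le (hσnn s)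
        _ = sg * (G1 t0 s * σ s) := by ring
  -- positivity of the mass of σ
  have hmid : 0 < ∫ s in α..β, σ s := by
    apply intervalIntegral.intervalIntegral_pos_of_pos_on (hσcont.intervalIntegrable _ _) _ hαβ
    intro x hx
    have hx1 : s0 - δ/2 < x := lt_of_le_of_lt (le_max_left _ _) hx.1
    have hx2 : x < s0 + δ/2 := lt_of_lt_of_le hx.2 (min_le_left _ _)
    have habs : |x - s0| < δ/2 := abs_lt.2 ⟨by linarith, by linarith⟩
    exact lt_max_iff.2 (Or.inr (by linarith))
  have i1 : (∫ s in (0:ℝ)..α, σ s) + (∫ s in α..β, σ s) = ∫ s in (0:ℝ)..β, σ s :=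
    intervalIntegral.integral_add_adjacent_intervals
      (hσcont.intervalIntegrable _ _) (hσcont.intervalIntegrable _ _)
  have i2 : (∫ s in (0:ℝ)..β, σ s) + (∫ s in β..T, σ s) = ∫ s in (0:ℝ)..T, σ s :=
    intervalIntegral.integral_add_adjacent_intervals
      (hσcont.intervalIntegrable _ _) (hσcont.intervalIntegrable _ _)
  have n1 : 0 ≤ ∫ s in (0:ℝ)..α, σ s :=
    intervalIntegral.integral_nonneg h0α (fun x _ => hσnn x)
  have n3 : 0 ≤ ∫ s in β..T, σ s :=
    intervalIntegral.integral_nonneg hβT (fun x _ => hσnn x)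
  have hTpos : 0 < ∫ s in (0:ℝ)..T, σ s := by linarith
  -- the solution on [0,T]
  have hulow : 0 < sg * ∫ s in (0:ℝ)..T, G1 t0 s * σ s := by
    have h1 : sg * (∫ s in (0:ℝ)..T, G1 t0 s * σ s)
        = ∫ s in (0:ℝ)..T, sg * (G1 t0 s * σ s) :=
      (intervalIntegral.integral_const_mul _ _).symm
    have hint2 : IntervalIntegrable (fun s => sg * (G1 t0 s * σ s)) volume 0 T := by
      apply IntervalIntegrable.const_mul
      apply ContinuousOn.intervalIntegrable
      rw [uIcc_of_le hT.le]
      exact hslice.mul hσcont.continuousOn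
    have hint1 : IntervalIntegrable (fun s => (E/2) * σ s) volume 0 T := hσint.const_mul _
    have hmono := intervalIntegral.integral_mono_on hT.le hint1 hint2 hptwise
    rw [intervalIntegral.integral_const_mul] at hmono
    have hEp : 0 < E/2 * ∫ s in (0:ℝ)..T, σ s := mul_pos (by linarith) hTpos
    rw [h1]; linarith
  -- the even extension of σ
  set σt : ℝ → ℝ := fun s => if s ≤ T then σ s else σ (2*T - s) with hσt
  have hσtcont : Continuous σt := aux_evenext_continuous hσcont
  have hσtnn : ∀ s, 0 ≤ σt s := by
    intro s
    by_cases h : s ≤ T <;> simp only [hσt, h, if_true, if_false] <;> exact hσnn _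
  have hσtint : IntervalIntegrable σt volume 0 (2*T) := hσtcont.intervalIntegrable _ _
  obtain ⟨huX2, hueq, huuniq⟩ := hG2.2 σt hσtint
  set ut : ℝ → ℝ := fun t => ∫ s in (0:ℝ)..(2*T), G2 t s * σt s with hut
  -- the big solution is nonpositive (after multiplying by sg)
  have hup : sg * ut t0 ≤ 0 := by
    have ht02T : t0 ∈ Icc (0:ℝ) (2*T) := ⟨ht0.1, by linarith [ht0.2]⟩
    have h1 : sg * ut t0 = ∫ s in (0:ℝ)..(2*T), sg * (G2 t0 s * σt s) :=
      (intervalIntegral.integral_const_mul _ _).symm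
    rw [h1]
    have hple : ∀ s ∈ Icc (0:ℝ) (2*T), sg * (G2 t0 s * σt s) ≤ 0 := by
      intro s hs
      have hg := hsign t0 ht02T s hs
      have hn := hσtnn s
      nlinarith
    have hnn : (0:ℝ) ≤ ∫ s in (0:ℝ)..(2*T), -(sg * (G2 t0 s * σt s)) :=
      intervalIntegral.integral_nonneg (by linarith) (fun s hs => by linarith [hple s hs])
    rw [intervalIntegral.integral_neg] at hnn
    linarith
  -- the reflected solution
  have hwX2 : (fun t => ut (2*T - t)) ∈ X2 := hrefl _ huX2
  have haew : ∀ᵐ t ∂volume, t ∈ Icc 0 (2*T) →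
      Lop n (tildeCoef T a) (fun x => ut (2*T - x)) t = σt t := by
    have h2 : ∀ᵐ t ∂(volume : Measure ℝ), ((2*T - t) ∈ Icc 0 (2*T) →
        Lop n (tildeCoef T a) ut (2*T - t) = σt (2*T - t)) :=
      (Measure.measurePreserving_sub_left volume (2*T)).quasiMeasurePreserving.ae hueq
    have h3 : ∀ᵐ t : ℝ ∂volume, t ≠ T := by
      rw [ae_iff]
      simp only [ne_eq, not_not, setOf_eq_eq_singleton]
      exact Real.volume_singleton
    filter_upwards [h2, h3] with t h2t h3t ht
    have hmem : 2*T - t ∈ Icc (0:ℝ) (2*T) := ⟨by linarith [ht.2], by linarith [ht.1]⟩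
    rw [aux_Lop_reflect n T a ut h3t, h2t hmem]
    show (if 2*T - t ≤ T then σ (2*T - t) else σ (2*T - (2*T - t)))
        = (if t ≤ T then σ t else σ (2*T - t))
    exact aux_evenext_reflect T σ t
  have hweq := huuniq _ hwX2 haew
  -- symmetry of the big solution
  have hsym : ∀ t ∈ Icc 0 (2*T), ut t = ut (2*T - t) := by
    intro t ht
    have h := hweq t ht
    change ut (2*T - t) = _ at h
    rw [h]
  have huX1 : ut ∈ X1 := hbc _ huX2 hsym
  -- restriction solves the problem on [0,T]
  have haerestrict : ∀ᵐ t ∂volume, t ∈ Icc 0 T → Lop n a ut t = σ t := by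
    filter_upwards [hueq] with t h ht
    have h2T : t ∈ Icc (0:ℝ) (2*T) := ⟨ht.1, by linarith [ht.2]⟩
    have heq := h h2T
    have hL : Lop n (tildeCoef T a) ut t = Lop n a ut t := by
      simp only [Lop]
      congr 1
      apply Finset.sum_congr rfl
      intro k _
      have : tildeCoef T a k t = a k t := if_pos ht.2
      rw [this]
    have hσeq : σt t = σ t := if_pos ht.2
    rw [← hL, heq, hσeq]
  have huniq := (hG1.2 σ hσint).2.2 ut huX1 haerestrict
  have hfin : ut t0 = ∫ s in (0:ℝ)..T, G1 t0 s * σ s := huniq t0 ht0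
  rw [hfin] at hup
  linarith

theorem green_sign_relations (n : ℕ) (hn : 1 ≤ n) (T : ℝ) (hT : 0 < T)
    (a : ℕ → ℝ → ℝ) (ha : ∀ k < 2 * n, IntervalIntegrable (a k) volume 0 T)
    (GN GD GM2 GP GN2 GD2 : ℝ → ℝ → ℝ)
    (hNres : Nonresonant n a T (XN n T))
    (hGN : IsGreen n a T (XN n T) GN)
    (hDres : Nonresonant n a T (XD n T))
    (hGD : IsGreen n a T (XD n T) GD)
    (hM2res : Nonresonant n a T (XM2 n T))
    (hGM2 : IsGreen n a T (XM2 n T) GM2)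
    (hPres : Nonresonant n (tildeCoef T a) (2 * T) (XP n (2 * T)))
    (hGP : IsGreen n (tildeCoef T a) (2 * T) (XP n (2 * T)) GP)
    (hN2res : Nonresonant n (tildeCoef T a) (2 * T) (XN n (2 * T)))
    (hGN2 : IsGreen n (tildeCoef T a) (2 * T) (XN n (2 * T)) GN2)
    (hD2res : Nonresonant n (tildeCoef T a) (2 * T) (XD n (2 * T)))
    (hGD2 : IsGreen n (tildeCoef T a) (2 * T) (XD n (2 * T)) GD2) :
    ((∀ t ∈ Icc 0 (2 * T), ∀ s ∈ Icc 0 (2 * T), GP t s ≤ 0) →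
      ∀ t ∈ Icc 0 T, ∀ s ∈ Icc 0 T, GN t s ≤ 0) ∧
    ((∀ t ∈ Icc 0 (2 * T), ∀ s ∈ Icc 0 (2 * T), 0 ≤ GP t s) →
      ∀ t ∈ Icc 0 T, ∀ s ∈ Icc 0 T, 0 ≤ GN t s) ∧
    ((∀ t ∈ Icc 0 (2 * T), ∀ s ∈ Icc 0 (2 * T), GN2 t s ≤ 0) →
      ∀ t ∈ Icc 0 T, ∀ s ∈ Icc 0 T, GN t s ≤ 0) ∧
    ((∀ t ∈ Icc 0 (2 * T), ∀ s ∈ Icc 0 (2 * T), 0 ≤ GN2 t s) →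
      ∀ t ∈ Icc 0 T, ∀ s ∈ Icc 0 T, 0 ≤ GN t s) ∧
    ((∀ t ∈ Icc 0 (2 * T), ∀ s ∈ Icc 0 (2 * T), GD2 t s ≤ 0) →
      ∀ t ∈ Icc 0 T, ∀ s ∈ Icc 0 T, GM2 t s ≤ 0) ∧
    ((∀ t ∈ Icc 0 (2 * T), ∀ s ∈ Icc 0 (2 * T), 0 ≤ GD2 t s) →
      ∀ t ∈ Icc 0 T, ∀ s ∈ Icc 0 T, 0 ≤ GM2 t s) := by
  have h2T : (0:ℝ) ≤ 2 * T := by linarith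
  refine ⟨?_, ?_, ?_, ?_, ?_, ?_⟩
  · intro hs t ht s hs'
    have := aux_engine n T hT a (XN n T) GN hGN (XP n (2 * T)) GP hGP
      (fun u hu => aux_refl_XP hn h2T hu)
      (fun u hu hsym => aux_bc_PN hn hT hu hsym) 1
      (fun t ht s hs' => by simpa using hs t ht s hs') t ht s hs'
    linarith
  · intro hs t ht s hs'
    have := aux_engine n T hT a (XN n T) GN hGN (XP n (2 * T)) GP hGP
      (fun u hu => aux_refl_XP hn h2T hu)
      (fun u hu hsym => aux_bc_PN hn hT hu hsym) (-1)
      (fun t ht s hs' => by linarith [hs t ht s hs']) t ht s hs'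
    linarith
  · intro hs t ht s hs'
    have := aux_engine n T hT a (XN n T) GN hGN (XN n (2 * T)) GN2 hGN2
      (fun u hu => aux_refl_XN hn h2T hu)
      (fun u hu hsym => aux_bc_NN hn hT hu hsym) 1
      (fun t ht s hs' => by simpa using hs t ht s hs') t ht s hs'
    linarith
  · intro hs t ht s hs'
    have := aux_engine n T hT a (XN n T) GN hGN (XN n (2 * T)) GN2 hGN2
      (fun u hu => aux_refl_XN hn h2T hu)
      (fun u hu hsym => aux_bc_NN hn hT hu hsym) (-1)
      (fun t ht s hs' => by linarith [hs t ht s hs']) t ht s hs'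
    linarith
  · intro hs t ht s hs'
    have := aux_engine n T hT a (XM2 n T) GM2 hGM2 (XD n (2 * T)) GD2 hGD2
      (fun u hu => aux_refl_XD hn h2T hu)
      (fun u hu hsym => aux_bc_DM hn hT hu hsym) 1
      (fun t ht s hs' => by simpa using hs t ht s hs') t ht s hs'
    linarith
  · intro hs t ht s hs'
    have := aux_engine n T hT a (XM2 n T) GM2 hGM2 (XD n (2 * T)) GD2 hGD2
      (fun u hu => aux_refl_XD hn h2T hu)
      (fun u hu hsym => aux_bc_DM hn hT hu hsym) (-1)
      (fun t ht s hs' => by linarith [hs t ht s hs']) t ht s hs'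
    linarith
end

section
/- Assume L is nonresonant in X_{N,T} and X_{D,T} with Green's functions G_N[T] and G_D[T], and L̃ is nonresonant in X_{P,2T} with Green's function G_P[2T]. Then: (1) if G_P[2T] ≥ 0 on J × J, then G_N[T](t,s) ≥ |G_D[T](t,s)| for all (t,s) ∈ I × I; (2) if G_P[2T] ≤ 0 on J × J, then G_N[T](t,s) ≤ −|G_D[T](t,s)| for all (t,s) ∈ I × I. -/
open MeasureTheory Set

open MeasureTheory Set intervalIntegral

lemma itd_reflect (k : ℕ) (f : ℝ → ℝ) (c a : ℝ) :
    iteratedDeriv k (fun x => f (c - x)) a = (-1 : ℝ)^k * iteratedDeriv k f (c - a) := by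
  have h : (fun x : ℝ => f (c - x)) = fun x => (fun y => f (c + y)) (-x) := by
    funext x; simp [sub_eq_add_neg]
  rw [h, iteratedDeriv_comp_neg k (fun y => f (c + y)) a,
    iteratedDeriv_comp_const_add k f c, smul_eq_mul]
  norm_num [sub_eq_add_neg]

lemma itd_sign (ε : ℝ) (hε : ε = 1 ∨ ε = -1) (k : ℕ) (f : ℝ → ℝ) (a : ℝ) :
    iteratedDeriv k (fun x => ε * f x) a = ε * iteratedDeriv k f a := by
  rcases hε with h | h <;> subst h
  · simp only [one_mul]
  · simp only [neg_one_mul, iteratedDeriv_fun_neg]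

lemma itd_sign_reflect (ε : ℝ) (hε : ε = 1 ∨ ε = -1) (k : ℕ) (f : ℝ → ℝ) (c a : ℝ) :
    iteratedDeriv k (fun x => ε * f (c - x)) a = ε * ((-1 : ℝ)^k * iteratedDeriv k f (c - a)) := by
  rw [itd_sign ε hε k (fun x => f (c - x)) a, itd_reflect]

lemma sq_int_zero {h : ℝ → ℝ} {T : ℝ} (hT : 0 < T) (hc : ContinuousOn h (Icc 0 T))
    (hint : (∫ s in (0:ℝ)..T, h s * h s) = 0) : ∀ s ∈ Icc 0 T, h s = 0 := by
  by_contra hcon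
  push_neg at hcon
  obtain ⟨s₀, hs₀, hne⟩ := hcon
  set c : ℝ := h s₀ * h s₀ with hc0
  have hcpos : 0 < c := mul_self_pos.mpr hne
  have hgc : ContinuousOn (fun s => h s * h s) (Icc 0 T) := hc.mul hc
  have hev : {s | c / 2 < h s * h s} ∈ nhdsWithin s₀ (Icc 0 T) := by
    have h1 : Filter.Tendsto (fun s => h s * h s) (nhdsWithin s₀ (Icc 0 T)) (nhds c) := hgc s₀ hs₀
    exact h1 (eventually_gt_nhds (by linarith : c / 2 < c))
  obtain ⟨δ, hδ, hball⟩ := Metric.mem_nhdsWithin_iff.1 hev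
  set α := max 0 (s₀ - δ/2) with hα
  set β := min T (s₀ + δ/2) with hβ
  have hab : α < β := by
    apply max_lt <;> apply lt_min
    · exact hT
    · linarith [hs₀.1]
    · linarith [hs₀.2]
    · linarith
  have hαmem : 0 ≤ α := le_max_left _ _
  have hβmem : β ≤ T := min_le_left _ _
  have hpos : ∀ s ∈ Ioo α β, 0 < h s * h s := by
    intro s hs
    have h1 : s ∈ Icc 0 T := ⟨le_trans hαmem hs.1.le, le_trans hs.2.le hβmem⟩
    have h2 : dist s s₀ < δ := by
      rw [Real.dist_eq, abs_lt]
      constructor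
      · have := le_max_right 0 (s₀ - δ/2); linarith [lt_of_le_of_lt this hs.1]
      · have := min_le_right T (s₀ + δ/2); linarith [lt_of_lt_of_le hs.2 this]
    have := hball ⟨Metric.mem_ball.2 h2, h1⟩
    have : c / 2 < h s * h s := this
    linarith
  have hii : ∀ u v : ℝ, u ∈ Icc 0 T → v ∈ Icc 0 T →
      IntervalIntegrable (fun s => h s * h s) volume u v := by
    intro u v hu hv
    apply ContinuousOn.intervalIntegrable
    exact hgc.mono (uIcc_subset_Icc hu hv)
  have hmemα : α ∈ Icc 0 T := ⟨hαmem, by linarith⟩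
  have hmemβ : β ∈ Icc 0 T := ⟨by linarith, hβmem⟩
  have hO : (0:ℝ) ∈ Icc 0 T := ⟨le_refl _, hT.le⟩
  have hTT : T ∈ Icc 0 T := ⟨hT.le, le_refl _⟩
  have e1 : (∫ s in (0:ℝ)..T, h s * h s)
      = (∫ s in (0:ℝ)..α, h s * h s) + (∫ s in α..β, h s * h s) + (∫ s in β..T, h s * h s) := by
    rw [integral_add_adjacent_intervals (hii 0 α hO hmemα) (hii α β hmemα hmemβ),
      integral_add_adjacent_intervals
        ((hii 0 α hO hmemα).trans (hii α β hmemα hmemβ)) (hii β T hmemβ hTT)]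
  have p1 : 0 ≤ ∫ s in (0:ℝ)..α, h s * h s :=
    integral_nonneg hαmem (fun s _ => mul_self_nonneg _)
  have p3 : 0 ≤ ∫ s in β..T, h s * h s :=
    integral_nonneg hβmem (fun s _ => mul_self_nonneg _)
  have p2 : 0 < ∫ s in α..β, h s * h s :=
    intervalIntegral_pos_of_pos_on (hii α β hmemα hmemβ) hpos hab
  rw [hint] at e1
  linarith

lemma tilde_sym (T : ℝ) (a : ℕ → ℝ → ℝ) (k : ℕ) (t : ℝ) (h : t ≠ T) :
    tildeCoef T a k (2*T - t) = (-1:ℝ)^k * tildeCoef T a k t := by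
  rcases lt_or_gt_of_ne h with hlt | hgt
  · have h1 : ¬ (2*T - t ≤ T) := by linarith
    simp only [tildeCoef, if_neg h1, if_pos hlt.le]
    norm_num
  · have h1 : 2*T - t ≤ T := by linarith
    have h2 : ¬ (t ≤ T) := by linarith
    simp only [tildeCoef, if_pos h1, if_neg h2]
    rw [← mul_assoc, ← mul_pow]
    norm_num

lemma key_s17 (n : ℕ) (hn : 1 ≤ n) (T : ℝ) (hT : 0 < T)
    (a : ℕ → ℝ → ℝ)
    (GX GP : ℝ → ℝ → ℝ) (X : Set (ℝ → ℝ))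
    (hGX : IsGreen n a T X GX)
    (hGP : IsGreen n (tildeCoef T a) (2 * T) (XP n (2 * T)) GP)
    (ε : ℝ) (hε : ε = 1 ∨ ε = -1)
    (hX : ∀ u : ℝ → ℝ, MemW (2 * n) T u →
      (∀ k < 2 * n, ((-1:ℝ)^k ≠ ε) → iteratedDeriv k u 0 = 0 ∧ iteratedDeriv k u T = 0) →
      u ∈ X) :
    ∀ t ∈ Icc 0 T, ∀ s ∈ Icc 0 T, GX t s = GP t s + ε * GP t (2 * T - s) := by
  have hε2 : ε * ε = 1 := by rcases hε with h | h <;> rw [h] <;> norm_num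
  have hT2 : (0:ℝ) < 2 * T := by linarith
  have hsubI : Icc (0:ℝ) T ⊆ Icc 0 (2*T) := Icc_subset_Icc le_rfl (by linarith)
  -- slice continuity
  have sliceGP : ∀ t ∈ Icc (0:ℝ) (2*T), ContinuousOn (fun s => GP t s) (Icc 0 (2*T)) := by
    intro t ht
    have := hGX.1
    exact hGP.1.comp (by fun_prop : Continuous (fun s : ℝ => (t, s))).continuousOn
      (fun s hs => Set.mk_mem_prod ht hs)
  have sliceGX : ∀ t ∈ Icc (0:ℝ) T, ContinuousOn (fun s => GX t s) (Icc 0 T) := by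
    intro t ht
    exact hGX.1.comp (by fun_prop : Continuous (fun s : ℝ => (t, s))).continuousOn
      (fun s hs => Set.mk_mem_prod ht hs)
  -- main integral identity
  have main : ∀ σ : ℝ → ℝ, IntervalIntegrable σ volume 0 T → ∀ t ∈ Icc (0:ℝ) T,
      (∫ s in (0:ℝ)..T, GX t s * σ s)
        = (∫ s in (0:ℝ)..T, GP t s * σ s) + ε * ∫ s in (0:ℝ)..T, GP t (2*T - s) * σ s := by
    intro σ hσ
    have hmaps2 : MapsTo (fun s : ℝ => 2*T - s) (Icc 0 (2*T)) (Icc 0 (2*T)) := by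
      intro x hx; simp only [mem_Icc] at hx ⊢; constructor <;> linarith
    set τ : ℝ → ℝ := fun s => if s ≤ T then σ s else ε * σ (2*T - s) with hτdef
    -- integrability of τ
    have hrefσ : IntervalIntegrable (fun s => ε * σ (2*T - s)) volume T (2*T) := by
      have h1 := (hσ.comp_sub_left (2*T))
      have b1 : 2*T - 0 = 2*T := by ring
      have b2 : 2*T - T = T := by ring
      rw [b1, b2] at h1
      exact h1.symm.const_mul ε
    have hτ1 : IntervalIntegrable τ volume 0 T := by
      rw [intervalIntegrable_iff_integrableOn_Ioc_of_le hT.le] at hσ ⊢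
      exact hσ.congr_fun (fun x hx => by simp only [hτdef, if_pos hx.2]) measurableSet_Ioc
    have hτ2 : IntervalIntegrable τ volume T (2*T) := by
      rw [intervalIntegrable_iff_integrableOn_Ioc_of_le (by linarith : T ≤ 2*T)] at hrefσ ⊢
      exact hrefσ.congr_fun
        (fun x hx => by simp only [hτdef, if_neg (not_le.2 hx.1)]) measurableSet_Ioc
    have hτ : IntervalIntegrable τ volume 0 (2*T) := hτ1.trans hτ2
    obtain ⟨huXP, huae, huniq⟩ := hGP.2 τ hτ
    set u : ℝ → ℝ := fun t => ∫ s in (0:ℝ)..2*T, GP t s * τ s with hudef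
    obtain ⟨hMemu, hBCu⟩ := huXP
    set v : ℝ → ℝ := fun x => ε * u (2*T - x) with hvdef
    have hitdv : ∀ (k : ℕ) (x : ℝ),
        iteratedDeriv k v x = ε * ((-1:ℝ)^k * iteratedDeriv k u (2*T - x)) :=
      fun k x => itd_sign_reflect ε hε k u (2*T) x
    have heven : ((-1:ℝ))^(2*n) = 1 := by rw [pow_mul]; norm_num
    have hodd : ((-1:ℝ))^(2*n - 1) = -1 := Odd.neg_one_pow ⟨n-1, by omega⟩
    have hIIsub : ∀ p q : ℝ, p ∈ Icc 0 (2*T) → q ∈ Icc 0 (2*T) →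
        IntervalIntegrable (iteratedDeriv (2*n) u) volume p q := fun p q hp hq =>
      hMemu.2.1.mono_set (by rw [uIcc_of_le hT2.le]; exact uIcc_subset_Icc hp hq)
    -- v ∈ XP
    have hvW : MemW (2*n) (2*T) v := by
      refine ⟨?_, ?_, ?_⟩
      · intro k hk
        have e : iteratedDeriv k v = fun x => ε * ((-1:ℝ)^k * iteratedDeriv k u (2*T - x)) :=
          funext (hitdv k)
        rw [e]
        exact continuousOn_const.mul (continuousOn_const.mul
          ((hMemu.1 k hk).comp ((continuous_const.sub continuous_id).continuousOn) hmaps2))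
      · have e : iteratedDeriv (2*n) v = fun x => ε * ((-1:ℝ)^(2*n) * iteratedDeriv (2*n) u (2*T - x)) :=
          funext (hitdv (2*n))
        rw [e]
        have h1 := hMemu.2.1.comp_sub_left (2*T)
        have b1 : 2*T - 0 = 2*T := by ring
        have b2 : 2*T - 2*T = 0 := by ring
        rw [b1, b2] at h1
        exact (h1.symm.const_mul _).const_mul _
      · intro t ht
        rw [hitdv, hitdv]
        have eint : (∫ s in (0:ℝ)..t, iteratedDeriv (2*n) v s)
            = ε * ∫ x in (2*T - t)..(2*T), iteratedDeriv (2*n) u x := by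
          have e : ∀ s : ℝ, iteratedDeriv (2*n) v s = ε * iteratedDeriv (2*n) u (2*T - s) :=
            fun s => by rw [hitdv, heven, one_mul]
          calc (∫ s in (0:ℝ)..t, iteratedDeriv (2*n) v s)
              = ∫ s in (0:ℝ)..t, ε * iteratedDeriv (2*n) u (2*T - s) := by simp only [e]
            _ = ε * ∫ s in (0:ℝ)..t, iteratedDeriv (2*n) u (2*T - s) := integral_const_mul _ _
            _ = ε * ∫ x in (2*T - t)..(2*T), iteratedDeriv (2*n) u x := by
                rw [integral_comp_sub_left]; norm_num
        have hmemt : (2*T - t) ∈ Icc (0:ℝ) (2*T) := hmaps2 ht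
        have hsplit : (∫ x in (0:ℝ)..(2*T - t), iteratedDeriv (2*n) u x)
              + (∫ x in (2*T - t)..(2*T), iteratedDeriv (2*n) u x)
            = ∫ x in (0:ℝ)..(2*T), iteratedDeriv (2*n) u x :=
          integral_add_adjacent_intervals (hIIsub 0 (2*T - t) ⟨le_rfl, hT2.le⟩ hmemt)
            (hIIsub (2*T - t) (2*T) hmemt ⟨hT2.le, le_rfl⟩)
        have ftc1 := hMemu.2.2 (2*T) ⟨hT2.le, le_rfl⟩
        have ftc2 := hMemu.2.2 (2*T - t) hmemt
        rw [eint, hodd]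
        simp only [sub_zero]
        linear_combination (ε : ℝ) * ftc1 - ε * ftc2 - ε * hsplit
    have hvXP : v ∈ XP n (2*T) := by
      refine ⟨hvW, ?_⟩
      intro k hk
      rw [hitdv, hitdv]
      have b1 : 2*T - 0 = 2*T := by ring
      have b2 : 2*T - 2*T = 0 := by ring
      rw [b1, b2, hBCu k hk]
    -- v solves the reflected equation
    have hvae : ∀ᵐ t ∂volume, t ∈ Icc 0 (2*T) → Lop n (tildeCoef T a) v t = τ t := by
      have hmapae : ∀ᵐ (t:ℝ) ∂volume, ((2*T - t) ∈ Icc (0:ℝ) (2*T) →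
          Lop n (tildeCoef T a) u (2*T - t) = τ (2*T - t)) := by
        have h1 : Filter.map (fun t : ℝ => 2*T - t) (ae volume) = ae volume :=
          MeasureTheory.Measure.map_sub_left_ae volume (2*T)
        have h2 : ∀ᶠ x in Filter.map (fun t : ℝ => 2*T - t) (ae volume),
            (x ∈ Icc (0:ℝ) (2*T) → Lop n (tildeCoef T a) u x = τ x) := by
          rw [h1]; exact huae
        exact Filter.eventually_map.mp h2
      have hneT : ∀ᵐ (t:ℝ) ∂volume, t ≠ T := by
        rw [MeasureTheory.ae_iff]
        simp only [ne_eq, not_not, Set.setOf_eq_eq_singleton]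
        exact Real.volume_singleton
      filter_upwards [hmapae, hneT] with t h1 h2 ht
      have hmemr : (2*T - t) ∈ Icc (0:ℝ) (2*T) := hmaps2 ht
      have hLu := h1 hmemr
      have hLv : Lop n (tildeCoef T a) v t = ε * Lop n (tildeCoef T a) u (2*T - t) := by
        unfold Lop
        rw [hitdv]
        have hsum : ∑ k ∈ Finset.range (2*n), tildeCoef T a k t * iteratedDeriv k v t
            = ∑ k ∈ Finset.range (2*n),
                ε * (tildeCoef T a k (2*T - t) * iteratedDeriv k u (2*T - t)) := by
          refine Finset.sum_congr rfl (fun k _ => ?_)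
          rw [hitdv, tilde_sym T a k t h2]
          ring
        rw [hsum, ← Finset.mul_sum, heven]
        ring
      have hτsym : τ (2*T - t) = ε * τ t := by
        rcases lt_or_gt_of_ne h2 with hlt | hgt
        · have hn1 : ¬ (2*T - t ≤ T) := by linarith
          simp only [hτdef, if_neg hn1, if_pos hlt.le]
          have harg : 2*T - (2*T - t) = t := by ring
          rw [harg]
        · have h1' : 2*T - t ≤ T := by linarith
          have h2' : ¬ (t ≤ T) := by linarith
          simp only [hτdef, if_pos h1', if_neg h2']
          rw [← mul_assoc, hε2, one_mul]
      rw [hLv, hLu, hτsym, ← mul_assoc, hε2, one_mul]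
    have hsymu : ∀ x ∈ Icc (0:ℝ) (2*T), ε * u (2*T - x) = u x := fun x hx => huniq v hvXP hvae x hx
    -- boundary vanishing
    have hvanish : ∀ k < 2*n, ((-1:ℝ)^k ≠ ε) →
        iteratedDeriv k u 0 = 0 ∧ iteratedDeriv k u T = 0 := by
      intro k hk hkε
      have factor_ne : ε * (-1:ℝ)^k - 1 ≠ 0 := by
        rcases hε with h|h <;> rcases Nat.even_or_odd k with hpar|hpar <;>
          rw [h] at hkε ⊢ <;> rw [hpar.neg_one_pow] at hkε ⊢
        all_goals norm_num at *
      have hatT : iteratedDeriv k u T = 0 := by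
        have hevT : (fun x => ε * u (2*T - x)) =ᶠ[nhds T] u := by
          filter_upwards [Icc_mem_nhds (show (0:ℝ) < T from hT) (show T < 2*T by linarith)] with x hx
          exact hsymu x hx
        have hT' := hevT.iteratedDeriv_eq k
        rw [itd_sign_reflect ε hε k u (2*T) T] at hT'
        have h2T : 2*T - T = T := by ring
        rw [h2T] at hT'
        have hz : (ε * (-1:ℝ)^k - 1) * iteratedDeriv k u T = 0 := by linear_combination hT'
        exact (mul_eq_zero.1 hz).resolve_left factor_ne
      have hat0 : iteratedDeriv k u 0 = 0 := by
        set F : ℝ → ℝ := fun x => ε * ((-1:ℝ)^k * iteratedDeriv k u (2*T - x)) - iteratedDeriv k u x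
          with hFdef
        have hG : ContinuousOn F (Icc 0 (2*T)) := by
          apply ContinuousOn.sub
          · exact continuousOn_const.mul (continuousOn_const.mul
              ((hMemu.1 k hk).comp ((continuous_const.sub continuous_id).continuousOn) hmaps2))
          · exact hMemu.1 k hk
        have hzero : ∀ x ∈ Ioo (0:ℝ) (2*T), F x = 0 := by
          intro x hx
          have hev : (fun y => ε * u (2*T - y)) =ᶠ[nhds x] u := by
            filter_upwards [Icc_mem_nhds hx.1 hx.2] with y hy
            exact hsymu y hy
          have he := hev.iteratedDeriv_eq k
          rw [itd_sign_reflect ε hε k u (2*T) x] at he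
          simp only [hFdef, he, sub_self]
        have hlim : F 0 = 0 := by
          have hne : (nhdsWithin (0:ℝ) (Ioo 0 (2*T))).NeBot := by
            apply mem_closure_iff_nhdsWithin_neBot.1
            rw [closure_Ioo (by linarith : (0:ℝ) ≠ 2*T)]
            exact ⟨le_rfl, by linarith⟩
          have t1 : Filter.Tendsto F (nhdsWithin 0 (Ioo 0 (2*T))) (nhds (F 0)) :=
            (hG 0 ⟨le_rfl, hT2.le⟩).mono Ioo_subset_Icc_self
          have t2 : Filter.Tendsto F (nhdsWithin 0 (Ioo 0 (2*T))) (nhds 0) := by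
            apply Filter.Tendsto.congr' ?_ tendsto_const_nhds
            filter_upwards [self_mem_nhdsWithin] with x hx
            exact (hzero x hx).symm
          exact tendsto_nhds_unique t1 t2
        have hb := hBCu k hk
        simp only [hFdef, sub_zero] at hlim
        rw [← hb] at hlim
        have hz : (ε * (-1:ℝ)^k - 1) * iteratedDeriv k u 0 = 0 := by linear_combination hlim
        exact (mul_eq_zero.1 hz).resolve_left factor_ne
      exact ⟨hat0, hatT⟩
    -- restriction to [0,T]
    have hWT : MemW (2*n) T u := by
      refine ⟨fun k hk => (hMemu.1 k hk).mono hsubI, ?_, fun x hx => hMemu.2.2 x (hsubI hx)⟩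
      exact hMemu.2.1.mono_set (by
        rw [uIcc_of_le hT.le, uIcc_of_le hT2.le]
        exact Icc_subset_Icc le_rfl (by linarith))
    have huX : u ∈ X := hX u hWT hvanish
    have haeX : ∀ᵐ x ∂volume, x ∈ Icc 0 T → Lop n a u x = σ x := by
      filter_upwards [huae] with x hx hmem
      have h1 := hx (hsubI hmem)
      have hcoef : Lop n a u x = Lop n (tildeCoef T a) u x := by
        unfold Lop
        congr 1
        refine Finset.sum_congr rfl (fun k _ => ?_)
        simp only [tildeCoef, if_pos hmem.2]
      have hτx : τ x = σ x := by simp only [hτdef, if_pos hmem.2]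
      rw [hcoef, h1, hτx]
    have hfin := (hGX.2 σ hσ).2.2 u huX haeX
    intro t ht
    have hsplitτ1 : IntervalIntegrable (fun s => GP t s * τ s) volume 0 T :=
      hτ1.continuousOn_mul (by rw [uIcc_of_le hT.le]; exact (sliceGP t (hsubI ht)).mono hsubI)
    have hsplitτ2 : IntervalIntegrable (fun s => GP t s * τ s) volume T (2*T) :=
      hτ2.continuousOn_mul (by
        rw [uIcc_of_le (by linarith : T ≤ 2*T)]
        exact (sliceGP t (hsubI ht)).mono (Icc_subset_Icc (by linarith) le_rfl))
    have e0 : u t = (∫ s in (0:ℝ)..T, GP t s * τ s) + ∫ s in T..(2*T), GP t s * τ s := by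
      simp only [hudef]
      rw [← integral_add_adjacent_intervals hsplitτ1 hsplitτ2]
    have e1 : (∫ s in (0:ℝ)..T, GP t s * τ s) = ∫ s in (0:ℝ)..T, GP t s * σ s := by
      apply integral_congr
      intro x hx
      rw [uIcc_of_le hT.le] at hx
      simp only [hτdef, if_pos hx.2]
    have e2 : (∫ s in T..(2*T), GP t s * τ s) = ε * ∫ s in (0:ℝ)..T, GP t (2*T - s) * σ s := by
      have e2a : (∫ s in T..(2*T), GP t s * τ s)
          = ∫ s in T..(2*T), (fun y => GP t (2*T - y) * (ε * σ y)) (2*T - s) := by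
        apply intervalIntegral.integral_congr_ae
        apply Filter.Eventually.of_forall
        intro x hx
        rw [uIoc_of_le (by linarith : T ≤ 2*T)] at hx
        have hxT : ¬ x ≤ T := not_le.2 hx.1
        simp only [hτdef, if_neg hxT]
        have harg : 2*T - (2*T - x) = x := by ring
        rw [harg]
      rw [e2a, integral_comp_sub_left (fun y => GP t (2*T - y) * (ε * σ y)) (2*T)]
      have b1 : 2*T - 2*T = 0 := by ring
      have b2 : 2*T - T = T := by ring
      rw [b1, b2, ← intervalIntegral.integral_const_mul]
      apply integral_congr
      intro x _
      ring
    rw [← hfin t ht, e0, e1, e2]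

  -- conclude kernel identity
  intro t ht s hs
  set h : ℝ → ℝ := fun s => GX t s - GP t s - ε * GP t (2*T - s) with hh
  have hmaps : MapsTo (fun s : ℝ => 2*T - s) (Icc 0 T) (Icc 0 (2*T)) := by
    intro x hx
    simp only [mem_Icc] at hx ⊢
    constructor <;> linarith
  have hconth : ContinuousOn h (Icc 0 T) := by
    apply ((sliceGX t ht).sub ((sliceGP t (hsubI ht)).mono hsubI)).sub
    exact continuousOn_const.mul
      (((sliceGP t (hsubI ht))).comp ((continuous_const.sub continuous_id).continuousOn) hmaps)
  have hIIh : IntervalIntegrable h volume 0 T := by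
    apply ContinuousOn.intervalIntegrable
    rwa [uIcc_of_le hT.le]
  have hm := main h hIIh t ht
  -- each product is interval integrable
  have hIGX : IntervalIntegrable (fun s => GX t s * h s) volume 0 T :=
    hIIh.continuousOn_mul (by rw [uIcc_of_le hT.le] ; exact sliceGX t ht)
  have hIGP : IntervalIntegrable (fun s => GP t s * h s) volume 0 T :=
    hIIh.continuousOn_mul (by rw [uIcc_of_le hT.le] ; exact (sliceGP t (hsubI ht)).mono hsubI)
  have hIGP' : IntervalIntegrable (fun s => GP t (2*T - s) * h s) volume 0 T :=
    hIIh.continuousOn_mul (by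
      rw [uIcc_of_le hT.le]
      exact (sliceGP t (hsubI ht)).comp ((continuous_const.sub continuous_id).continuousOn) hmaps)
  have hsq : (∫ s in (0:ℝ)..T, h s * h s) = 0 := by
    have e1 : (∫ s in (0:ℝ)..T, h s * h s)
        = (∫ s in (0:ℝ)..T, GX t s * h s) - ((∫ s in (0:ℝ)..T, GP t s * h s)
            + ε * ∫ s in (0:ℝ)..T, GP t (2*T - s) * h s) := by
      rw [← intervalIntegral.integral_const_mul, ← integral_add hIGP (hIGP'.const_mul ε),
        ← integral_sub hIGX (hIGP.add (hIGP'.const_mul ε))]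
      apply integral_congr
      intro x _
      simp only [hh]
      ring
    rw [e1, hm]
    ring
  have := sq_int_zero hT hconth hsq s hs
  simp only [hh] at this
  linarith

theorem green_neumann_dominates_dirichlet (n : ℕ) (hn : 1 ≤ n) (T : ℝ) (hT : 0 < T)
    (a : ℕ → ℝ → ℝ) (ha : ∀ k < 2 * n, IntervalIntegrable (a k) volume 0 T)
    (GN GD GP : ℝ → ℝ → ℝ)
    (hNres : Nonresonant n a T (XN n T))
    (hGN : IsGreen n a T (XN n T) GN)
    (hDres : Nonresonant n a T (XD n T))
    (hGD : IsGreen n a T (XD n T) GD)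
    (hPres : Nonresonant n (tildeCoef T a) (2 * T) (XP n (2 * T)))
    (hGP : IsGreen n (tildeCoef T a) (2 * T) (XP n (2 * T)) GP) :
    ((∀ t ∈ Icc 0 (2 * T), ∀ s ∈ Icc 0 (2 * T), 0 ≤ GP t s) →
      ∀ t ∈ Icc 0 T, ∀ s ∈ Icc 0 T, |GD t s| ≤ GN t s) ∧
    ((∀ t ∈ Icc 0 (2 * T), ∀ s ∈ Icc 0 (2 * T), GP t s ≤ 0) →
      ∀ t ∈ Icc 0 T, ∀ s ∈ Icc 0 T, GN t s ≤ -|GD t s|) := by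
  have hXN : ∀ u : ℝ → ℝ, MemW (2 * n) T u →
      (∀ k < 2 * n, ((-1:ℝ)^k ≠ (1:ℝ)) → iteratedDeriv k u 0 = 0 ∧ iteratedDeriv k u T = 0) →
      u ∈ XN n T := by
    intro u hW hbc
    refine ⟨hW, fun k hk => ?_⟩
    have h1 : 2*k+1 < 2*n := by omega
    have h2 : ((-1:ℝ))^(2*k+1) ≠ (1:ℝ) := by
      rw [Odd.neg_one_pow ⟨k, by ring⟩]; norm_num
    exact hbc _ h1 h2
  have hXD : ∀ u : ℝ → ℝ, MemW (2 * n) T u →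
      (∀ k < 2 * n, ((-1:ℝ)^k ≠ (-1:ℝ)) → iteratedDeriv k u 0 = 0 ∧ iteratedDeriv k u T = 0) →
      u ∈ XD n T := by
    intro u hW hbc
    refine ⟨hW, fun k hk => ?_⟩
    have h1 : 2*k < 2*n := by omega
    have h2 : ((-1:ℝ))^(2*k) ≠ (-1:ℝ) := by
      rw [pow_mul]; norm_num
    exact hbc _ h1 h2
  have hkN := key_s17 n hn T hT a GN GP (XN n T) hGN hGP 1 (Or.inl rfl) hXN
  have hkD := key_s17 n hn T hT a GD GP (XD n T) hGD hGP (-1) (Or.inr rfl) hXD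
  constructor
  · intro hpos t ht s hs
    have ht2 : t ∈ Icc (0:ℝ) (2*T) := ⟨ht.1, by linarith [ht.2]⟩
    have hs2 : s ∈ Icc (0:ℝ) (2*T) := ⟨hs.1, by linarith [hs.2]⟩
    have hs2' : 2*T - s ∈ Icc (0:ℝ) (2*T) := ⟨by linarith [hs.2], by linarith [hs.1]⟩
    have p1 := hpos t ht2 s hs2
    have p2 := hpos t ht2 _ hs2'
    rw [hkN t ht s hs, hkD t ht s hs, abs_le]
    constructor <;> linarith
  · intro hneg t ht s hs
    have ht2 : t ∈ Icc (0:ℝ) (2*T) := ⟨ht.1, by linarith [ht.2]⟩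
    have hs2 : s ∈ Icc (0:ℝ) (2*T) := ⟨hs.1, by linarith [hs.2]⟩
    have hs2' : 2*T - s ∈ Icc (0:ℝ) (2*T) := ⟨by linarith [hs.2], by linarith [hs.1]⟩
    have p1 := hneg t ht2 s hs2
    have p2 := hneg t ht2 _ hs2'
    rw [hkN t ht s hs, hkD t ht s hs]
    have habs : |GP t s + (-1) * GP t (2*T - s)| ≤ -(GP t s + 1 * GP t (2*T - s)) :=
      abs_le.2 ⟨by linarith, by linarith⟩
    linarith
end
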